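/- arXiv:math/0010135 — 4 statements merged into one kernel-verified Lean document; each statement's English description precedes it below -/
import Mathlib

section
/- The square of the Vandermonde determinant in n variables equals the sum over all permutations σ in S_n of the determinant of the n×n matrix whose (k,ℓ) entry is u_{σ(k)}^{ℓ+k-2}; that is, Δ_n(u)^2 = Σ_{σ∈S_n} det( u_{σ(k)}^{ℓ+k-2} )_{1≤k,ℓ≤n}. -/
open Finset Matrix Equiv

def vandermondeProd {R : Type*} [CommRing R] {n : ℕ} (u : Fin n → R) : R :=
  ∏ i : Fin n, ∏ j ∈ Finset.univ.filter (fun j => i < j), (u i - u j)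

/-- The square of the Vandermonde determinant equals the sum over all permutations
`σ ∈ S_n` of the determinant of the matrix with `(k,ℓ)` entry `u_{σ(k)}^{ℓ+k-2}`
(here written with 0-based indices, so the exponent is `ℓ + k`). -/
theorem vandermonde_sq_eq_sum_det {R : Type*} [CommRing R] {n : ℕ} (u : Fin n → R) :
    (vandermondeProd u) ^ 2 =
      ∑ σ : Equiv.Perm (Fin n),
        Matrix.det (Matrix.of fun k ℓ : Fin n => u (σ k) ^ ((ℓ : ℕ) + (k : ℕ))) := by
  set D := (Matrix.vandermonde u).det with hDdef
  have hvp : vandermondeProd u = (-1 : R) ^ (∑ i : Fin n, (Finset.Ioi i).card) * D := by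
    rw [hDdef, Matrix.det_vandermonde, vandermondeProd,
      ← Finset.prod_pow_eq_pow_sum, ← Finset.prod_mul_distrib]
    refine Finset.prod_congr rfl fun i _ => ?_
    have h1 : Finset.univ.filter (fun j => i < j) = Finset.Ioi i := by
      ext j; simp
    rw [h1]
    calc ∏ j ∈ Finset.Ioi i, (u i - u j)
        = ∏ j ∈ Finset.Ioi i, ((-1) * (u j - u i)) := by
          refine Finset.prod_congr rfl fun j _ => by ring
      _ = (-1 : R) ^ (Finset.Ioi i).card * ∏ j ∈ Finset.Ioi i, (u j - u i) := by
          rw [Finset.prod_mul_distrib, Finset.prod_const]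
  -- each summand
  have hterm : ∀ σ : Equiv.Perm (Fin n),
      Matrix.det (Matrix.of fun k ℓ : Fin n => u (σ k) ^ ((ℓ : ℕ) + (k : ℕ)))
        = (Perm.sign σ : R) * (∏ k : Fin n, u (σ k) ^ (k : ℕ)) * D := by
    intro σ
    have h1 : (Matrix.of fun k ℓ : Fin n => u (σ k) ^ ((ℓ : ℕ) + (k : ℕ)))
        = Matrix.of (fun k ℓ : Fin n => (u (σ k) ^ (k : ℕ)) *
            ((Matrix.vandermonde u).submatrix σ id) k ℓ) := by
      ext k ℓ
      simp [Matrix.vandermonde, pow_add, mul_comm]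
    rw [h1, Matrix.det_mul_column, Matrix.det_permute]
    ring
  rw [Finset.sum_congr rfl fun σ _ => hterm σ]
  have hsum : ∑ σ : Equiv.Perm (Fin n),
      (Perm.sign σ : R) * (∏ k : Fin n, u (σ k) ^ (k : ℕ)) * D = D * D := by
    rw [← Finset.sum_mul, mul_comm]
    congr 1
    rw [hDdef, Matrix.det_apply]
    refine Finset.sum_congr rfl fun σ _ => ?_
    simp [Matrix.vandermonde, Units.smul_def, zsmul_eq_mul]
  rw [hsum, hvp]
  ring_nf
  rw [mul_comm (∑ i : Fin n, (Finset.Ioi i).card) 2, pow_mul, neg_one_sq, one_pow, mul_one]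
end

section
/- The product of two Vandermonde determinants equals a sum of determinants: Δ_n(u)·Δ_n(v) = Σ_{σ∈S_n} det( u_{σ(k)}^{ℓ-1} v_{σ(k)}^{k-1} )_{1≤ℓ,k≤n}. -/
lemma vandermondeProd_eq_Ioi {R : Type*} [CommRing R] {n : ℕ} (u : Fin n → R) :
    vandermondeProd u = ∏ i : Fin n, ∏ j ∈ Finset.Ioi i, (u i - u j) := by
  unfold vandermondeProd
  apply Finset.prod_congr rfl
  intro i _
  apply Finset.prod_congr _ (fun _ _ => rfl)
  ext j; simp

lemma vandermondeProd_mul {R : Type*} [CommRing R] {n : ℕ} (u v : Fin n → R) :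
    vandermondeProd u * vandermondeProd v =
      (Matrix.vandermonde u).det * (Matrix.vandermonde v).det := by
  rw [vandermondeProd_eq_Ioi, vandermondeProd_eq_Ioi, Matrix.det_vandermonde,
    Matrix.det_vandermonde, ← Finset.prod_mul_distrib, ← Finset.prod_mul_distrib]
  apply Finset.prod_congr rfl; intro i _
  rw [← Finset.prod_mul_distrib, ← Finset.prod_mul_distrib]
  apply Finset.prod_congr rfl; intro j _
  ring

/-- The product of two Vandermonde determinants equals a sum of determinants:
`Δ_n(u)·Δ_n(v) = Σ_{σ∈S_n} det( u_{σ(k)}^{ℓ-1} v_{σ(k)}^{k-1} )_{1≤ℓ,k≤n}`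
(written with 0-based indices `ℓ, k`). -/
theorem vandermonde_mul_vandermonde_eq_sum_det {R : Type*} [CommRing R] {n : ℕ}
    (u v : Fin n → R) :
    vandermondeProd u * vandermondeProd v =
      ∑ σ : Equiv.Perm (Fin n),
        Matrix.det (Matrix.of fun ℓ k : Fin n =>
          u (σ k) ^ (ℓ : ℕ) * v (σ k) ^ (k : ℕ)) := by
  rw [vandermondeProd_mul]
  have step : ∀ σ : Equiv.Perm (Fin n),
      Matrix.det (Matrix.of fun ℓ k : Fin n =>
        u (σ k) ^ (ℓ : ℕ) * v (σ k) ^ (k : ℕ)) =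
      (∏ k : Fin n, v (σ k) ^ (k : ℕ)) *
        ((Equiv.Perm.sign σ : ℤ) * (Matrix.vandermonde u).det) := by
    intro σ
    have h1 : (Matrix.of fun ℓ k : Fin n =>
        u (σ k) ^ (ℓ : ℕ) * v (σ k) ^ (k : ℕ)) =
        Matrix.of (fun ℓ k : Fin n =>
          (fun k : Fin n => v (σ k) ^ (k : ℕ)) k *
          ((Matrix.vandermonde u).transpose.submatrix id σ) ℓ k) := by
      ext ℓ k
      simp [Matrix.vandermonde, Matrix.transpose, mul_comm]
    rw [h1, Matrix.det_mul_row, Matrix.det_permute', Matrix.det_transpose]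
  rw [Finset.sum_congr rfl (fun σ _ => step σ)]
  rw [Matrix.det_apply' (Matrix.vandermonde v), Finset.mul_sum]
  apply Finset.sum_congr rfl
  intro σ _
  simp only [Matrix.vandermonde_apply]
  ring
end

section
/- The number of standard Young tableaux of shape λ = (λ_1 ≥ ... ≥ λ_m > 0) with |λ| = n equals n! · det( 1/(λ_i − i + j)! )_{1≤i,j≤m}, where 1/k! is interpreted as 0 for k < 0. -/
/-- The number of standard Young tableaux of shape `λ = (λ_1, …, λ_m)`:
fillings of the cells `{(i,j) : j < λ_i}` with the numbers `1, …, |λ|`,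
strictly increasing along rows and columns. -/
noncomputable def sytCard (m : ℕ) (lam : Fin m → ℕ) : ℕ :=
  Nat.card {T : {p : Fin m × ℕ // p.2 < lam p.1} → ℕ //
    (∀ a b : {p : Fin m × ℕ // p.2 < lam p.1},
        a.1.1 = b.1.1 → a.1.2 < b.1.2 → T a < T b) ∧
    (∀ a b : {p : Fin m × ℕ // p.2 < lam p.1},
        a.1.1 < b.1.1 → a.1.2 = b.1.2 → T a < T b) ∧
    Set.BijOn T Set.univ (Set.Icc 1 (∑ i, lam i))}

/-- `1/k!` for an integer `k`, interpreted as `0` for `k < 0`. -/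
noncomputable def invFactorial (k : ℤ) : ℝ :=
  if 0 ≤ k then ((k.toNat).factorial : ℝ)⁻¹ else 0

open Finset

namespace SYTaux

variable {m : ℕ}

/-- cells of the diagram -/
abbrev Cell (m : ℕ) (lam : Fin m → ℕ) := {p : Fin m × ℕ // p.2 < lam p.1}

def IsSYT (m : ℕ) (lam : Fin m → ℕ) (T : Cell m lam → ℕ) : Prop :=
  (∀ a b : Cell m lam, a.1.1 = b.1.1 → a.1.2 < b.1.2 → T a < T b) ∧
  (∀ a b : Cell m lam, a.1.1 < b.1.1 → a.1.2 = b.1.2 → T a < T b) ∧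
  Set.BijOn T Set.univ (Set.Icc 1 (∑ i, lam i))

abbrev SYT (m : ℕ) (lam : Fin m → ℕ) := {T : Cell m lam → ℕ // IsSYT m lam T}

lemma lam_le_sum (lam : Fin m → ℕ) (i : Fin m) : lam i ≤ ∑ k, lam k :=
  Finset.single_le_sum (fun _ _ => Nat.zero_le _) (Finset.mem_univ i)

instance cellFinite (lam : Fin m → ℕ) : Finite (Cell m lam) := by
  apply Finite.of_injective (fun c : Cell m lam =>
    ((c.1.1, ⟨c.1.2, lt_of_lt_of_le c.2 (le_trans (lam_le_sum lam c.1.1) (Nat.le_succ _))⟩) :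
      Fin m × Fin (∑ k, lam k + 1)))
  rintro ⟨⟨a, b⟩, h⟩ ⟨⟨a', b'⟩, h'⟩ e
  simp only [Prod.mk.injEq, Fin.mk.injEq] at e
  exact Subtype.ext (Prod.ext e.1 e.2)

instance sytFinite (lam : Fin m → ℕ) : Finite (SYT m lam) := by
  apply Finite.of_injective (fun T : SYT m lam =>
    (fun c => ⟨T.1 c, Nat.lt_succ_of_le (T.2.2.2.1 (Set.mem_univ c)).2⟩ :
      Cell m lam → Fin (∑ k, lam k + 1)))
  intro T₁ T₂ e
  refine Subtype.ext (funext fun c => ?_)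
  exact congrArg Fin.val (congrFun e c)

lemma base_card (lam : Fin m → ℕ) (h0 : ∑ i, lam i = 0) : Nat.card (SYT m lam) = 1 := by
  have hz : ∀ i, lam i = 0 := by
    intro i
    exact Nat.eq_zero_of_le_zero (h0 ▸ lam_le_sum lam i)
  have : IsEmpty (Cell m lam) := ⟨fun c => by simpa [hz c.1.1] using c.2⟩
  have hu : Unique (SYT m lam) := by
    refine ⟨⟨⟨fun c => isEmptyElim c, ?_, ?_, ?_⟩⟩, ?_⟩
    · exact fun a => isEmptyElim a
    · exact fun a => isEmptyElim a
    · rw [h0]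
      constructor
      · exact fun a _ => isEmptyElim a
      constructor
      · exact fun a _ => isEmptyElim a
      · intro v hv
        exact absurd hv (by simp)
    · intro T
      exact Subtype.ext (funext fun c => isEmptyElim c)
  exact Nat.card_unique

lemma invFactorial_zero : invFactorial 0 = 1 := by simp [invFactorial]

lemma invFactorial_neg {k : ℤ} (h : k < 0) : invFactorial k = 0 := by
  simp [invFactorial, not_le.mpr h]

lemma base_det (lam : Fin m → ℕ) (h0 : ∑ i, lam i = 0) :
    Matrix.det (Matrix.of fun i j : Fin m =>
      invFactorial ((lam i : ℤ) - (i : ℤ) + (j : ℤ))) = 1 := by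
  have hz : ∀ i, lam i = 0 := fun i => Nat.eq_zero_of_le_zero (h0 ▸ lam_le_sum lam i)
  rw [Matrix.det_of_upperTriangular]
  · rw [Finset.prod_eq_one]
    intro i _
    simp [Matrix.of_apply, hz i, invFactorial_zero]
  · intro i j hij
    simp only [id_eq] at hij
    have : ((lam i : ℤ) - i + j) < 0 := by
      have := hz i
      have : (j : ℤ) < (i : ℤ) := by exact_mod_cast hij
      omega
    simp [Matrix.of_apply, invFactorial_neg this]


lemma invFactorial_pred (k : ℤ) : invFactorial (k - 1) = (k : ℝ) * invFactorial k := by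
  rcases lt_trichotomy k 0 with h | rfl | h
  · rw [invFactorial_neg (by omega), invFactorial_neg h, mul_zero]
  · rw [invFactorial_neg (by omega), Int.cast_zero, zero_mul]
  · obtain ⟨n, rfl⟩ : ∃ n : ℕ, k = (n : ℤ) + 1 := ⟨(k - 1).toNat, by omega⟩
    have h1 : ((n : ℤ) + 1 - 1).toNat = n := by omega
    have h2 : ((n : ℤ) + 1).toNat = n + 1 := by omega
    rw [invFactorial, invFactorial, if_pos (by omega : (0:ℤ) ≤ (n:ℤ)+1-1),
      if_pos (by omega : (0:ℤ) ≤ (n:ℤ)+1), h1, h2, Nat.factorial_succ]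
    have hn : ((n : ℝ) + 1) ≠ 0 := by positivity
    have hf : ((n.factorial : ℝ)) ≠ 0 := by positivity
    push_cast
    field_simp

lemma sum_det_updateRow (A : Matrix (Fin m) (Fin m) ℝ) (f : Fin m → Fin m → ℝ) (n : ℝ)
    (hf : ∀ σ : Equiv.Perm (Fin m), ∑ r, f r (σ⁻¹ r) = n) :
    ∑ r, (A.updateRow r fun j => f r j * A r j).det = n * A.det := by
  have key : ∀ (r : Fin m) (σ : Equiv.Perm (Fin m)),
      (∏ i, (A.updateRow r fun j => f r j * A r j) (σ i) i)
        = f r (σ⁻¹ r) * ∏ i, A (σ i) i := by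
    intro r σ
    have h1 : ∀ i : Fin m, (A.updateRow r fun j => f r j * A r j) (σ i) i
        = (if i = σ⁻¹ r then f r i else 1) * A (σ i) i := by
      intro i
      by_cases h : σ i = r
      · have h' : i = σ⁻¹ r := by rw [← h]; simp
        rw [Matrix.updateRow_apply, if_pos h, if_pos h', h]
      · have h' : i ≠ σ⁻¹ r := fun hc => h (by rw [hc]; simp)
        rw [Matrix.updateRow_apply, if_neg h, if_neg h', one_mul]
    rw [Finset.prod_congr rfl (fun i _ => h1 i), Finset.prod_mul_distrib]
    congr 1
    simp
  calc ∑ r, (A.updateRow r fun j => f r j * A r j).det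
      = ∑ r, ∑ σ : Equiv.Perm (Fin m),
          ((Equiv.Perm.sign σ : ℤ) : ℝ) * (f r (σ⁻¹ r) * ∏ i, A (σ i) i) := by
        refine Finset.sum_congr rfl fun r _ => ?_
        rw [Matrix.det_apply']
        exact Finset.sum_congr rfl fun σ _ => by rw [key r σ]
    _ = ∑ σ : Equiv.Perm (Fin m), (∑ r, f r (σ⁻¹ r)) *
          (((Equiv.Perm.sign σ : ℤ) : ℝ) * ∏ i, A (σ i) i) := by
        rw [Finset.sum_comm]
        refine Finset.sum_congr rfl fun σ _ => ?_
        rw [Finset.sum_mul]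
        exact Finset.sum_congr rfl fun r _ => by ring
    _ = n * A.det := by
        rw [Matrix.det_apply', Finset.mul_sum]
        exact Finset.sum_congr rfl fun σ _ => by rw [hf σ]

/-- the matrix of the determinant formula -/
noncomputable def rowA (m : ℕ) (lam : Fin m → ℕ) : Matrix (Fin m) (Fin m) ℝ :=
  Matrix.of fun i j : Fin m => invFactorial ((lam i : ℤ) - (i : ℤ) + (j : ℤ))

/-- the matrix with row `r` "decremented" -/
noncomputable def rowB (m : ℕ) (lam : Fin m → ℕ) (r : Fin m) : Matrix (Fin m) (Fin m) ℝ :=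
  (rowA m lam).updateRow r fun j => invFactorial ((lam r : ℤ) - 1 - (r : ℤ) + (j : ℤ))

lemma sum_det_rowB (lam : Fin m → ℕ) :
    ∑ r, (rowB m lam r).det = (∑ i, lam i : ℝ) * (rowA m lam).det := by
  have hf : ∀ σ : Equiv.Perm (Fin m),
      ∑ r, (Int.cast ((lam r : ℤ) - (r : ℤ) + ((σ⁻¹ r : Fin m) : ℤ)) : ℝ) = (∑ i, lam i : ℝ) := by
    intro σ
    push_cast
    rw [Finset.sum_add_distrib, Finset.sum_sub_distrib]
    rw [Equiv.sum_comp σ⁻¹ (fun i : Fin m => ((i : ℕ) : ℝ))]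
    push_cast
    ring
  have key := sum_det_updateRow (rowA m lam)
    (fun r j => (Int.cast ((lam r : ℤ) - (r : ℤ) + (j : ℤ)) : ℝ)) (∑ i, lam i : ℝ) hf
  rw [← key]
  refine Finset.sum_congr rfl fun r _ => ?_
  unfold rowB
  have hv : (fun j : Fin m => invFactorial ((lam r : ℤ) - 1 - (r : ℤ) + (j : ℤ)))
      = fun j : Fin m => (Int.cast ((lam r : ℤ) - (r : ℤ) + (j : ℤ)) : ℝ) * rowA m lam r j := by
    funext j
    have h : ((lam r : ℤ) - 1 - (r : ℤ) + (j : ℤ)) = ((lam r : ℤ) - (r : ℤ) + (j : ℤ)) - 1 := by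
      ring
    rw [h, invFactorial_pred]
    rfl
  rw [hv]

/-- `i` is a removable corner of `lam` -/
def Corner (lam : Fin m → ℕ) (i : Fin m) : Prop :=
  0 < lam i ∧ ∀ k, i < k → lam k < lam i

lemma det_rowB_eq_zero (lam : Fin m → ℕ) (hanti : Antitone lam) (i : Fin m)
    (h : ¬ Corner lam i) : (rowB m lam i).det = 0 := by
  by_cases h0 : lam i = 0
  · by_cases hm : (i : ℕ) + 1 < m
    · set i' : Fin m := ⟨(i : ℕ) + 1, hm⟩ with hi'
      have hne : i ≠ i' := by
        intro hc
        have := congrArg Fin.val hc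
        simp [hi'] at this
      have hii' : i < i' := by rw [Fin.lt_def]; simp [hi']
      have hlam' : lam i' = 0 := by
        have := hanti (le_of_lt hii')
        omega
      apply Matrix.det_zero_of_row_eq hne
      have L : (rowB m lam i) i = fun j : Fin m => invFactorial ((lam i : ℤ) - 1 - (i : ℤ) + (j : ℤ)) :=
        Matrix.updateRow_self
      have R : (rowB m lam i) i' = (rowA m lam) i' := Matrix.updateRow_ne (Ne.symm hne)
      rw [L, R]
      funext j
      show invFactorial _ = invFactorial ((lam i' : ℤ) - (i' : ℤ) + (j : ℤ))
      have hv : ((i' : Fin m) : ℕ) = (i : ℕ) + 1 := rfl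
      congr 1
      rw [hlam', h0]
      omega
    · apply Matrix.det_eq_zero_of_row_eq_zero i
      intro j
      simp only [rowB, Matrix.updateRow_apply, if_pos rfl]
      apply invFactorial_neg
      have : (j : ℕ) < m := j.2
      have : (i : ℕ) + 1 = m := by omega
      omega
  · -- lam i > 0 but not a corner: some k > i with lam k ≥ lam i
    have : ∃ k, i < k ∧ lam i ≤ lam k := by
      by_contra hc
      push_neg at hc
      exact h ⟨Nat.pos_of_ne_zero h0, fun k hk => hc k hk⟩
    obtain ⟨k, hik, hlk⟩ := this
    have hm : (i : ℕ) + 1 < m := by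
      have : (i : ℕ) < (k : ℕ) := hik
      have := k.2
      omega
    set i' : Fin m := ⟨(i : ℕ) + 1, hm⟩ with hi'
    have hii' : i < i' := by rw [Fin.lt_def]; simp [hi']
    have hi'k : i' ≤ k := by rw [Fin.le_def]; simp [hi']; omega
    have hlam' : lam i' = lam i := le_antisymm (hanti (le_of_lt hii'))
      (le_trans hlk (hanti hi'k))
    have hne : i ≠ i' := ne_of_lt hii'
    apply Matrix.det_zero_of_row_eq hne
    have L : (rowB m lam i) i = fun j : Fin m => invFactorial ((lam i : ℤ) - 1 - (i : ℤ) + (j : ℤ)) :=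
      Matrix.updateRow_self
    have R : (rowB m lam i) i' = (rowA m lam) i' := Matrix.updateRow_ne (Ne.symm hne)
    rw [L, R]
    funext j
    show invFactorial _ = invFactorial ((lam i' : ℤ) - (i' : ℤ) + (j : ℤ))
    have hv : ((i' : Fin m) : ℕ) = (i : ℕ) + 1 := rfl
    congr 1
    rw [hlam']
    omega

/-- decrement `lam` at `i` -/
def dec (lam : Fin m → ℕ) (i : Fin m) : Fin m → ℕ := Function.update lam i (lam i - 1)

lemma rowB_eq_rowA_dec (lam : Fin m → ℕ) (i : Fin m) (hpos : 0 < lam i) :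
    rowB m lam i = rowA m (dec lam i) := by
  funext k j
  by_cases hk : k = i
  · subst hk
    show (Matrix.updateRow _ _ _) k j = _
    rw [Matrix.updateRow_self]
    show invFactorial _ = invFactorial _
    have hd : dec lam k k = lam k - 1 := Function.update_self _ _ _
    congr 1
    rw [hd]
    omega
  · show (Matrix.updateRow _ _ _) k j = _
    rw [Matrix.updateRow_ne hk]
    show invFactorial _ = invFactorial _
    have hd : dec lam i k = lam k := Function.update_of_ne hk _ _
    congr 2
    rw [hd]

lemma dec_antitone {lam : Fin m → ℕ} (hanti : Antitone lam) {i : Fin m} (hc : Corner lam i) :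
    Antitone (dec lam i) := by
  obtain ⟨hpos, hlt⟩ := hc
  intro a b hab
  simp only [dec, Function.update_apply]
  split_ifs with hb ha ha
  · exact le_rfl
  · have hai : a < i := lt_of_le_of_ne (hb ▸ hab) ha
    have := hanti (le_of_lt hai)
    omega
  · have hib : i < b := lt_of_le_of_ne (ha ▸ hab) (Ne.symm hb)
    have := hlt b hib
    omega
  · exact hanti hab

lemma sum_dec {lam : Fin m → ℕ} {i : Fin m} (hpos : 0 < lam i) :
    ∑ k, dec lam i k = (∑ k, lam k) - 1 := by
  unfold dec
  rw [Finset.sum_update_of_mem (Finset.mem_univ i)]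
  have h := Finset.sum_eq_sum_sdiff_singleton_add (Finset.mem_univ i) lam
  omega



lemma dec_le (lam : Fin m → ℕ) (i k : Fin m) : dec lam i k ≤ lam k := by
  by_cases h : k = i
  · subst h; simp [dec]
  · simp [dec, Function.update_of_ne h]

lemma dec_apply_ne (lam : Fin m → ℕ) {i k : Fin m} (h : k ≠ i) : dec lam i k = lam k :=
  Function.update_of_ne h _ _

lemma dec_apply_self (lam : Fin m → ℕ) (i : Fin m) : dec lam i i = lam i - 1 :=
  Function.update_self _ _ _

/-- embedding of the cells of the decremented shape -/
def emb (lam : Fin m → ℕ) (i : Fin m) (c : Cell m (dec lam i)) : Cell m lam :=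
  ⟨c.1, lt_of_lt_of_le c.2 (dec_le lam i c.1.1)⟩

lemma emb_ne (lam : Fin m → ℕ) (i : Fin m) (c : Cell m (dec lam i)) :
    (emb lam i c).1 ≠ (i, lam i - 1) := by
  intro h
  have h1 : c.1.1 = i := congrArg Prod.fst h
  have h2 : c.1.2 = lam i - 1 := congrArg Prod.snd h
  have := c.2
  rw [h1, dec_apply_self, h2] at this
  omega

/-- extend a tableau of `dec lam i` by the cell `(i, lam i - 1)` with maximal entry -/
noncomputable def extFun (lam : Fin m → ℕ) (i : Fin m) (T' : Cell m (dec lam i) → ℕ)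
    (q : Cell m lam) : ℕ :=
  if h : q.1 = (i, lam i - 1) then ∑ k, lam k else
    T' ⟨q.1, by
      have hq := q.2
      by_cases h1 : q.1.1 = i
      · have h2 : q.1.2 ≠ lam i - 1 := fun hc2 => h (Prod.ext h1 hc2)
        rw [h1] at hq
        rw [h1, dec_apply_self]
        omega
      · rw [dec_apply_ne lam h1]
        exact hq⟩

lemma extFun_corner (lam : Fin m → ℕ) (i : Fin m) (T' : Cell m (dec lam i) → ℕ)
    (q : Cell m lam) (h : q.1 = (i, lam i - 1)) : extFun lam i T' q = ∑ k, lam k := by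
  rw [extFun, dif_pos h]

lemma extFun_emb (lam : Fin m → ℕ) (i : Fin m) (T' : Cell m (dec lam i) → ℕ)
    (c : Cell m (dec lam i)) : extFun lam i T' (emb lam i c) = T' c := by
  rw [extFun, dif_neg (emb_ne lam i c)]
  congr 1

lemma extFun_ne (lam : Fin m → ℕ) (i : Fin m) (T' : Cell m (dec lam i) → ℕ)
    (q : Cell m lam) (h : q.1 ≠ (i, lam i - 1)) :
    ∃ c : Cell m (dec lam i), (emb lam i c).1 = q.1 ∧ extFun lam i T' q = T' c := by
  rw [extFun, dif_neg h]
  exact ⟨⟨q.1, _⟩, rfl, rfl⟩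

lemma ext_isSYT (lam : Fin m → ℕ) (hanti : Antitone lam) {i : Fin m} (hc : Corner lam i)
    (T' : Cell m (dec lam i) → ℕ) (hT' : IsSYT m (dec lam i) T') :
    IsSYT m lam (extFun lam i T') := by
  obtain ⟨hpos, hlt⟩ := hc
  set n := ∑ k, lam k with hn
  have hn' : ∑ k, dec lam i k = n - 1 := sum_dec hpos
  have hn1 : 1 ≤ n := le_trans hpos (lam_le_sum lam i)
  have hT'le : ∀ c : Cell m (dec lam i), 1 ≤ T' c ∧ T' c ≤ n - 1 := by
    intro c
    have := hT'.2.2.1 (Set.mem_univ c)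
    rw [hn'] at this
    exact ⟨this.1, this.2⟩
  -- the corner cell
  refine ⟨?_, ?_, ?_, ?_, ?_⟩
  · -- rows
    intro a b hfst hsnd
    by_cases hb : b.1 = (i, lam i - 1)
    · rw [extFun_corner lam i T' b hb]
      have ha : a.1 ≠ (i, lam i - 1) := by
        intro hca
        have : a.1.2 = b.1.2 := by
          rw [hca, hb]
        omega
      obtain ⟨c, hc1, hc2⟩ := extFun_ne lam i T' a ha
      rw [hc2]
      have := (hT'le c).2
      omega
    · have ha : a.1 ≠ (i, lam i - 1) := by
        intro hca
        -- a is the corner cell, but b is to its right in the same row: impossible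
        have ha1 : a.1.1 = i := congrArg Prod.fst hca
        have ha2 : a.1.2 = lam i - 1 := congrArg Prod.snd hca
        have hb2 := b.2
        rw [← hfst, ha1] at hb2
        omega
      obtain ⟨ca, hca1, hca2⟩ := extFun_ne lam i T' a ha
      obtain ⟨cb, hcb1, hcb2⟩ := extFun_ne lam i T' b hb
      rw [hca2, hcb2]
      apply hT'.1
      · show ca.1.1 = cb.1.1
        have e1 : ca.1.1 = a.1.1 := congrArg Prod.fst hca1
        have e2 : cb.1.1 = b.1.1 := congrArg Prod.fst hcb1
        rw [e1, e2, hfst]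
      · have e1 : ca.1.2 = a.1.2 := congrArg Prod.snd hca1
        have e2 : cb.1.2 = b.1.2 := congrArg Prod.snd hcb1
        omega
  · -- columns
    intro a b hfst hsnd
    by_cases hb : b.1 = (i, lam i - 1)
    · rw [extFun_corner lam i T' b hb]
      have ha : a.1 ≠ (i, lam i - 1) := by
        intro hca
        have ha1 : a.1.1 = i := congrArg Prod.fst hca
        have hb1 : b.1.1 = i := congrArg Prod.fst hb
        rw [ha1, hb1] at hfst
        exact lt_irrefl _ hfst
      obtain ⟨c, hc1, hc2⟩ := extFun_ne lam i T' a ha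
      rw [hc2]
      have := (hT'le c).2
      omega
    · have ha : a.1 ≠ (i, lam i - 1) := by
        intro hca
        have ha1 : a.1.1 = i := congrArg Prod.fst hca
        have ha2 : a.1.2 = lam i - 1 := congrArg Prod.snd hca
        have hb2 := b.2
        have : lam b.1.1 < lam i := hlt b.1.1 (ha1 ▸ hfst)
        omega
      obtain ⟨ca, hca1, hca2⟩ := extFun_ne lam i T' a ha
      obtain ⟨cb, hcb1, hcb2⟩ := extFun_ne lam i T' b hb
      rw [hca2, hcb2]
      apply hT'.2.1
      · show ca.1.1 < cb.1.1
        have e1 : ca.1.1 = a.1.1 := congrArg Prod.fst hca1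
        have e2 : cb.1.1 = b.1.1 := congrArg Prod.fst hcb1
        rw [e1, e2]; exact hfst
      · have e1 : ca.1.2 = a.1.2 := congrArg Prod.snd hca1
        have e2 : cb.1.2 = b.1.2 := congrArg Prod.snd hcb1
        omega
  · -- MapsTo
    intro q _
    by_cases hq : q.1 = (i, lam i - 1)
    · rw [extFun_corner lam i T' q hq]
      exact ⟨hn1, le_rfl⟩
    · obtain ⟨c, hc1, hc2⟩ := extFun_ne lam i T' q hq
      rw [hc2]
      have := hT'le c
      exact ⟨this.1, by omega⟩
  · -- InjOn
    intro q1 _ q2 _ he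
    by_cases h1 : q1.1 = (i, lam i - 1) <;> by_cases h2 : q2.1 = (i, lam i - 1)
    · exact Subtype.ext (h1.trans h2.symm)
    · exfalso
      rw [extFun_corner lam i T' q1 h1] at he
      obtain ⟨c, _, hc2⟩ := extFun_ne lam i T' q2 h2
      rw [hc2] at he
      have := (hT'le c).2
      omega
    · exfalso
      rw [extFun_corner lam i T' q2 h2] at he
      obtain ⟨c, _, hc2⟩ := extFun_ne lam i T' q1 h1
      rw [hc2] at he
      have := (hT'le c).2
      omega
    · obtain ⟨c1, hc11, hc12⟩ := extFun_ne lam i T' q1 h1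
      obtain ⟨c2, hc21, hc22⟩ := extFun_ne lam i T' q2 h2
      rw [hc12, hc22] at he
      have := hT'.2.2.2.1 (Set.mem_univ c1) (Set.mem_univ c2) he
      apply Subtype.ext
      rw [← hc11, ← hc21, this]
  · -- SurjOn
    intro v hv
    rcases eq_or_lt_of_le hv.2 with hv2 | hv2
    · refine ⟨⟨(i, lam i - 1), show lam i - 1 < lam i by omega⟩, Set.mem_univ _, ?_⟩
      rw [extFun_corner lam i T' _ rfl, hv2]
    · have : v ∈ Set.Icc 1 (∑ k, dec lam i k) := by
        rw [hn']
        exact ⟨hv.1, by omega⟩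
      obtain ⟨c, _, hcv⟩ := hT'.2.2.2.2 this
      exact ⟨emb lam i c, Set.mem_univ _, by rw [extFun_emb]; exact hcv⟩

section Restrict

variable {lam : Fin m → ℕ} {T : Cell m lam → ℕ} (hT : IsSYT m lam T)
  {p : Cell m lam} (hp : T p = ∑ k, lam k) (hn : 0 < ∑ k, lam k)

include hT hp hn

lemma max_cell_snd : p.1.2 = lam p.1.1 - 1 := by
  have h2 := p.2
  by_contra hne
  have hlt : p.1.2 + 1 < lam p.1.1 := by omega
  have h1 : T p < T ⟨(p.1.1, p.1.2 + 1), hlt⟩ :=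
    hT.1 p ⟨(p.1.1, p.1.2 + 1), hlt⟩ rfl (Nat.lt_succ_self _)
  have h3 := (hT.2.2.1 (Set.mem_univ (⟨(p.1.1, p.1.2 + 1), hlt⟩ : Cell m lam))).2
  omega

lemma max_cell_corner (hanti : Antitone lam) : Corner lam p.1.1 := by
  refine ⟨by have := p.2; omega, ?_⟩
  intro k hk
  by_contra hge
  push_neg at hge
  have hc := max_cell_snd hT hp hn
  have h2 := p.2
  have hlt : p.1.2 < lam k := by omega
  have h1 : T p < T ⟨(k, p.1.2), hlt⟩ := hT.2.1 p ⟨(k, p.1.2), hlt⟩ hk rfl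
  have h3 := (hT.2.2.1 (Set.mem_univ (⟨(k, p.1.2), hlt⟩ : Cell m lam))).2
  omega

lemma restrict_isSYT (hanti : Antitone lam) :
    IsSYT m (dec lam p.1.1) (fun c => T (emb lam p.1.1 c)) := by
  set i := p.1.1 with hi
  have hcor := max_cell_corner hT hp hn hanti
  have hsnd := max_cell_snd hT hp hn
  have hps : p.1 = (i, lam i - 1) := Prod.ext rfl hsnd
  have hn' : ∑ k, dec lam i k = (∑ k, lam k) - 1 := sum_dec hcor.1
  have hembne : ∀ c : Cell m (dec lam i), emb lam i c ≠ p := by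
    intro c hce
    exact emb_ne lam i c (by rw [hce, hps])
  have hTle : ∀ c : Cell m (dec lam i), 1 ≤ T (emb lam i c) ∧ T (emb lam i c) ≤ (∑ k, lam k) - 1 := by
    intro c
    have hIcc := hT.2.2.1 (Set.mem_univ (emb lam i c))
    have hne : T (emb lam i c) ≠ ∑ k, lam k := by
      intro he
      exact hembne c (hT.2.2.2.1 (Set.mem_univ _) (Set.mem_univ _) (he.trans hp.symm))
    exact ⟨hIcc.1, by have := hIcc.2; omega⟩
  refine ⟨?_, ?_, ?_, ?_, ?_⟩
  · intro a b hfst hsnd'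
    exact hT.1 (emb lam i a) (emb lam i b) hfst hsnd'
  · intro a b hfst hsnd'
    exact hT.2.1 (emb lam i a) (emb lam i b) hfst hsnd'
  · intro c _
    rw [hn']
    exact hTle c
  · intro c1 _ c2 _ he
    have h5 := hT.2.2.2.1 (Set.mem_univ (emb lam i c1)) (Set.mem_univ (emb lam i c2)) he
    have h6 : (emb lam i c1).1 = (emb lam i c2).1 := congrArg Subtype.val h5
    exact Subtype.ext h6
  · intro v hv
    rw [hn'] at hv
    have hv' : v ∈ Set.Icc 1 (∑ k, lam k) := ⟨hv.1, by have := hv.2; omega⟩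
    obtain ⟨q, _, hqv⟩ := hT.2.2.2.2 hv'
    have hqne : q.1 ≠ (i, lam i - 1) := by
      intro hq
      have : q = p := Subtype.ext (hq.trans hps.symm)
      rw [this, hp] at hqv
      have := hv.2
      omega
    have hqcell : q.1.2 < dec lam i q.1.1 := by
      by_cases h1 : q.1.1 = i
      · have h2 : q.1.2 ≠ lam i - 1 := fun hc2 => hqne (Prod.ext h1 hc2)
        have := q.2
        rw [h1] at this
        rw [h1, dec_apply_self]
        omega
      · rw [dec_apply_ne lam h1]
        exact q.2
    refine ⟨⟨q.1, hqcell⟩, Set.mem_univ _, ?_⟩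
    show T (emb lam i ⟨q.1, hqcell⟩) = v
    have he : emb lam i ⟨q.1, hqcell⟩ = q := Subtype.ext rfl
    rw [he, hqv]

end Restrict

noncomputable def G (lam : Fin m → ℕ) (hanti : Antitone lam)
    (x : Σ i : {i : Fin m // Corner lam i}, SYT m (dec lam i.1)) : SYT m lam :=
  ⟨extFun lam x.1.1 x.2.1, ext_isSYT lam hanti x.1.2 x.2.1 x.2.2⟩

lemma G_bijective (lam : Fin m → ℕ) (hanti : Antitone lam) (hn : 0 < ∑ k, lam k) :
    Function.Bijective (G lam hanti) := by
  constructor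
  · rintro ⟨⟨i, hci⟩, Tx, hTx⟩ ⟨⟨j, hcj⟩, Ty, hTy⟩ he
    have he' : extFun lam i Tx = extFun lam j Ty := congrArg Subtype.val he
    -- first components are equal
    have hij : i = j := by
      by_contra hne
      have hcell : Cell m lam := ⟨(i, lam i - 1), show lam i - 1 < lam i by
        have := hci.1; omega⟩
      have h1 : extFun lam i Tx ⟨(i, lam i - 1), show lam i - 1 < lam i by
          have := hci.1; omega⟩ = ∑ k, lam k := extFun_corner _ _ _ _ rfl
      have h2 : (⟨(i, lam i - 1), show lam i - 1 < lam i by have := hci.1; omega⟩ :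
          Cell m lam).1 ≠ (j, lam j - 1) := by
        intro hc
        exact hne (congrArg Prod.fst hc)
      obtain ⟨c, _, hc2⟩ := extFun_ne lam j Ty _ h2
      have h3 := (hTy.2.2.1 (Set.mem_univ c)).2
      rw [sum_dec hcj.1] at h3
      rw [he', hc2] at h1
      omega
    subst hij
    have hT : Tx = Ty := by
      funext c
      have e1 := extFun_emb lam i Tx c
      have e2 := extFun_emb lam i Ty c
      rw [← e1, ← e2, he']
    subst hT
    rfl
  · intro T
    obtain ⟨p, _, hp⟩ := T.2.2.2.2.2 (Set.mem_Icc.mpr ⟨hn, le_rfl⟩)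
    have hcor := max_cell_corner T.2 hp hn hanti
    have hsnd := max_cell_snd T.2 hp hn
    have hps : p.1 = (p.1.1, lam p.1.1 - 1) := Prod.ext rfl hsnd
    refine ⟨⟨⟨p.1.1, hcor⟩, ⟨fun c => T.1 (emb lam p.1.1 c),
      restrict_isSYT T.2 hp hn hanti⟩⟩, ?_⟩
    apply Subtype.ext
    funext q
    show extFun lam p.1.1 (fun c => T.1 (emb lam p.1.1 c)) q = T.1 q
    by_cases hq : q.1 = (p.1.1, lam p.1.1 - 1)
    · rw [extFun_corner _ _ _ _ hq]
      have : q = p := Subtype.ext (hq.trans hps.symm)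
      rw [this, hp]
    · obtain ⟨c, hc1, hc2⟩ := extFun_ne lam p.1.1 (fun c => T.1 (emb lam p.1.1 c)) q hq
      rw [hc2]
      exact congrArg T.1 (Subtype.ext hc1)

open scoped Classical in
lemma card_rec (lam : Fin m → ℕ) (hanti : Antitone lam) (hn : 0 < ∑ k, lam k) :
    Nat.card (SYT m lam) =
      ∑ i : Fin m, if Corner lam i then Nat.card (SYT m (dec lam i)) else 0 := by
  rw [← Nat.card_eq_of_bijective _ (G_bijective lam hanti hn)]
  letI : Fintype {i : Fin m // Corner lam i} := Subtype.fintype _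
  letI : ∀ i : {i : Fin m // Corner lam i}, Fintype (SYT m (dec lam i.1)) :=
    fun i => Fintype.ofFinite _
  rw [Nat.card_eq_fintype_card, Fintype.card_sigma]
  simp_rw [← Nat.card_eq_fintype_card]
  have h1 : ∀ x : Fin m, x ∈ Finset.univ.filter (Corner lam) ↔ Corner lam x := by simp
  rw [← Finset.sum_subtype (Finset.univ.filter (Corner lam)) h1
    (fun i => Nat.card (SYT m (dec lam i))), Finset.sum_filter]

lemma main_induction (N : ℕ) : ∀ lam : Fin m → ℕ, Antitone lam → ∑ i, lam i = N →
    (Nat.card (SYT m lam) : ℝ) = (N.factorial : ℝ) * (rowA m lam).det := by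
  induction N with
  | zero =>
    intro lam hanti hsum
    rw [base_card lam hsum,
      show (rowA m lam).det = 1 from base_det lam hsum]
    simp
  | succ n ih =>
    intro lam hanti hsum
    classical
    rw [card_rec lam hanti (by omega)]
    have hterm : ∀ i : Fin m,
        ((if Corner lam i then Nat.card (SYT m (dec lam i)) else 0 : ℕ) : ℝ)
          = (n.factorial : ℝ) * (rowB m lam i).det := by
      intro i
      by_cases hc : Corner lam i
      · rw [if_pos hc, ih (dec lam i) (dec_antitone hanti hc)
          (by rw [sum_dec hc.1]; omega), rowB_eq_rowA_dec lam i hc.1]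
      · rw [if_neg hc, det_rowB_eq_zero lam hanti i hc]
        simp
    rw [Nat.cast_sum]
    rw [Finset.sum_congr rfl fun i _ => hterm i, ← Finset.mul_sum, sum_det_rowB lam]
    have hcast : (∑ i, (lam i : ℝ)) = ((n : ℝ) + 1) := by
      rw [← Nat.cast_sum, hsum]
      push_cast
      ring
    rw [hcast, Nat.factorial_succ]
    push_cast
    ring

end SYTaux

/-- The number of standard Young tableaux of shape `λ = (λ_1 ≥ … ≥ λ_m > 0)` with
`|λ| = n` equals `n! · det( 1/(λ_i − i + j)! )_{1≤i,j≤m}` (0-based indices: the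
exponent shift `−i+j` is unchanged). -/
theorem sytCard_eq_factorial_mul_det (m n : ℕ) (lam : Fin m → ℕ)
    (hanti : Antitone lam) (hpos : ∀ i, 0 < lam i) (hsum : ∑ i, lam i = n) :
    (sytCard m lam : ℝ) =
      (n.factorial : ℝ) *
        Matrix.det (Matrix.of fun i j : Fin m =>
          invFactorial ((lam i : ℤ) - (i : ℤ) + (j : ℤ))) := by
  have h1 : sytCard m lam = Nat.card (SYTaux.SYT m lam) := rfl
  have h2 := SYTaux.main_induction n lam hanti hsum
  rw [h1, h2]
  rfl
end

section
/- The number of standard Young tableaux of shape λ with m = number of parts and h_i := λ_i − i + m equals |λ|! · ∏_{1≤i<j≤m}(h_i − h_j) / ∏_{i=1}^m h_i!. -/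
set_option maxHeartbeats 1000000

/-- `h_i = λ_i − i + m` (with 1-based `i`; here `i : Fin m` is 0-based, so
`h_i = λ_i + m − 1 − i`). -/
def hookNum (m : ℕ) (lam : Fin m → ℕ) (i : Fin m) : ℤ :=
  (lam i : ℤ) + (m : ℤ) - 1 - (i : ℤ)


open Polynomial Finset

lemma teles (f g : ℕ → ℝ[X]) (n : ℕ) :
    (∏ j ∈ range n, f j) - (∏ j ∈ range n, g j)
      = ∑ j ∈ range n, (∏ k ∈ range j, f k) * (f j - g j) * (∏ k ∈ Ico (j+1) n, g k) := by
  induction n with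
  | zero => simp
  | succ n ih =>
    rw [prod_range_succ, prod_range_succ, sum_range_succ]
    have : (∏ j ∈ range n, f j) * f n - (∏ j ∈ range n, g j) * g n
        = ((∏ j ∈ range n, f j) - (∏ j ∈ range n, g j)) * g n
          + (∏ j ∈ range n, f j) * (f n - g n) := by ring
    rw [this, ih, sum_mul]
    refine congrArg₂ (· + ·) ?_ ?_
    · refine sum_congr rfl fun j hj => ?_
      rw [mem_range] at hj
      rw [Finset.prod_Ico_succ_top (by omega : j + 1 ≤ n)]
      ring
    · rw [Ico_self, prod_empty, mul_one]

lemma leadingCoeff_basisDivisor (u v : ℝ) :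
    (Lagrange.basisDivisor u v).leadingCoeff = (u - v)⁻¹ := by
  rcases eq_or_ne u v with h | h
  · simp [h, Lagrange.basisDivisor_self]
  · rw [Lagrange.basisDivisor, leadingCoeff_mul, leadingCoeff_C,
      (monic_X_sub_C v).leadingCoeff, mul_one]

lemma stepA {m : ℕ} (x : Fin m → ℝ) (hx : Function.Injective x) :
    ∑ i, x i * ∏ j ∈ univ.erase i, ((x i - x j - 1) / (x i - x j))
      = (∑ i, x i) - (m : ℝ) * ((m : ℝ) - 1) / 2 := by
  rcases Nat.lt_or_ge m 2 with hm | hm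
  · interval_cases m
    · simp
    · simp [Fin.sum_univ_one]
  · classical
    set a : ℕ → ℝ := fun k => if h : k < m then x ⟨k, h⟩ else 0 with ha
    have haf : ∀ i : Fin m, a i = x i := fun i => dif_pos i.isLt
    set P : ℝ[X] := ∏ k ∈ range m, (X - C (a k)) with hPdef
    set P1 : ℝ[X] := ∏ k ∈ range m, (X - C (a k + 1)) with hP1def
    have hPm : P.Monic := monic_prod_of_monic _ _ fun k _ => monic_X_sub_C _
    have hP1m : P1.Monic := monic_prod_of_monic _ _ fun k _ => monic_X_sub_C _
    have hPd : P.natDegree = m := by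
      rw [hPdef, natDegree_prod_of_monic _ _ fun k _ => monic_X_sub_C _]
      simp only [natDegree_X_sub_C]
      simp
    have hP1d : P1.natDegree = m := by
      rw [hP1def, natDegree_prod_of_monic _ _ fun k _ => monic_X_sub_C _]
      simp only [natDegree_X_sub_C]
      simp
    have cP : P.coeff m = 1 := by
      have := hPm.coeff_natDegree; rwa [hPd] at this
    have cP1 : P1.coeff m = 1 := by
      have := hP1m.coeff_natDegree; rwa [hP1d] at this
    have cPs : P.coeff (m - 1) = -∑ k ∈ range m, a k := by
      have := prod_X_sub_C_coeff_card_pred (range m) a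
        (by rw [card_range]; omega)
      rwa [card_range] at this
    have cP1s : P1.coeff (m - 1) = -(∑ k ∈ range m, a k) - m := by
      have := prod_X_sub_C_coeff_card_pred (range m) (fun k => a k + 1)
        (by rw [card_range]; omega)
      rw [card_range] at this
      rw [hP1def, this, sum_add_distrib, sum_const, card_range, nsmul_eq_mul]
      ring
    have cPhigh : ∀ k, m < k → P.coeff k = 0 := fun k hk =>
      coeff_eq_zero_of_natDegree_lt (by rw [hPd]; exact hk)
    have cP1high : ∀ k, m < k → P1.coeff k = 0 := fun k hk =>
      coeff_eq_zero_of_natDegree_lt (by rw [hP1d]; exact hk)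
    have htel : P - P1 = ∑ j ∈ range m,
        (∏ k ∈ range j, (X - C (a k))) * ∏ k ∈ Ico (j+1) m, (X - C (a k + 1)) := by
      rw [hPdef, hP1def, teles]
      refine sum_congr rfl fun j hj => ?_
      have h1 : (X - C (a j)) - (X - C (a j + 1)) = 1 := by
        rw [C_add, C_1]; ring
      rw [h1, mul_one]
    have cH1 : (P - P1).coeff (m - 1) = (m : ℝ) := by
      rw [coeff_sub, cPs, cP1s]; ring
    have key : ∀ j ∈ range m,
        ((∏ k ∈ range j, (X - C (a k))) * ∏ k ∈ Ico (j+1) m, (X - C (a k + 1))).coeff (m - 2)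
          = (a j + (j : ℝ)) - ((∑ k ∈ range m, a k) + (m : ℝ) - 1) := by
      intro j hj
      rw [mem_range] at hj
      set b : ℕ → ℝ := fun k => if k < j then a k else a k + 1 with hb
      have h1 : (∏ k ∈ range j, (X - C (a k))) = ∏ k ∈ range j, (X - C (b k)) :=
        prod_congr rfl fun k hk => by
          rw [mem_range] at hk; rw [hb]; simp [hk]
      have h2 : (∏ k ∈ Ico (j+1) m, (X - C (a k + 1))) = ∏ k ∈ Ico (j+1) m, (X - C (b k)) :=
        prod_congr rfl fun k hk => by
          rw [mem_Ico] at hk; rw [hb]; simp only []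
          rw [if_neg (by omega)]
      have hdisj : Disjoint (range j) (Ico (j+1) m) := by
        rw [Finset.disjoint_left]
        intro k hk hk'
        rw [mem_range] at hk; rw [mem_Ico] at hk'; omega
      have hu : (range j ∪ Ico (j+1) m).card = m - 1 := by
        rw [card_union_of_disjoint hdisj, card_range, Nat.card_Ico]; omega
      have hc := prod_X_sub_C_coeff_card_pred (range j ∪ Ico (j+1) m) b
        (by rw [hu]; omega)
      rw [hu, (by omega : m - 1 - 1 = m - 2), sum_union hdisj] at hc
      rw [h1, h2, ← prod_union hdisj, hc]
      have e1 : ∑ k ∈ range j, b k = ∑ k ∈ range j, a k :=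
        sum_congr rfl fun k hk => by
          rw [mem_range] at hk; rw [hb]; simp [hk]
      have e2 : ∑ k ∈ Ico (j+1) m, b k
          = (∑ k ∈ Ico (j+1) m, a k) + ((m - (j+1) : ℕ) : ℝ) := by
        have e2' : ∀ k ∈ Ico (j+1) m, b k = a k + 1 := fun k hk => by
          rw [mem_Ico] at hk; rw [hb]; simp only []
          rw [if_neg (by omega)]
        rw [sum_congr rfl e2', sum_add_distrib, sum_const,
          Nat.card_Ico, nsmul_eq_mul, mul_one]
      have e3 : ∑ k ∈ range m, a k
          = (∑ k ∈ range j, a k) + (a j + ∑ k ∈ Ico (j+1) m, a k) := by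
        rw [← Finset.sum_range_add_sum_Ico a hj.le,
          Finset.sum_eq_sum_Ico_succ_bot hj a]
      rw [e1, e2, e3, Nat.cast_sub (by omega : j + 1 ≤ m)]
      push_cast
      ring
    have cH2 : (P - P1).coeff (m - 2)
        = -((m:ℝ) - 1) * (∑ k ∈ range m, a k) - (m:ℝ) * ((m:ℝ) - 1) / 2 := by
      rw [htel, finset_sum_coeff, sum_congr rfl key]
      have hgauss : (∑ j ∈ range m, (j:ℝ)) * 2 = (m:ℝ) * ((m:ℝ) - 1) := by
        have h0 := Finset.sum_range_id_mul_two m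
        have h1 : (((∑ i ∈ range m, i) * 2 : ℕ) : ℝ) = ((m * (m-1) : ℕ) : ℝ) := by
          rw [h0]
        push_cast [Nat.cast_sub (by omega : 1 ≤ m)] at h1
        linarith [h1]
      rw [sum_sub_distrib, sum_add_distrib, sum_const, card_range, nsmul_eq_mul]
      linear_combination hgauss / 2
    set G : ℝ[X] := X * (P - P1) - C (m : ℝ) * P with hGdef
    have Gcoeff : ∀ k, 1 ≤ k → G.coeff k = (P - P1).coeff (k-1) - (m:ℝ) * P.coeff k := by
      intro k hk
      rw [hGdef, coeff_sub, coeff_C_mul]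
      congr 1
      cases k with
      | zero => omega
      | succ k => rw [coeff_X_mul]; norm_num
    have Gdeg : G.degree < (m : ℕ) := by
      rw [degree_lt_iff_coeff_zero]
      intro k hk
      rw [Gcoeff k (by omega)]
      rcases eq_or_lt_of_le hk with rfl | hlt
      · rw [cH1, cP, mul_one, sub_self]
      · have h1 : (P - P1).coeff (k-1) = 0 := by
          rw [coeff_sub]
          rcases Nat.lt_or_ge m (k-1) with h | h
          · rw [cPhigh _ h, cP1high _ h, sub_self]
          · have : k - 1 = m := by omega
            rw [this, cP, cP1, sub_self]
        rw [h1, cPhigh _ hlt, mul_zero, sub_zero]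
    have Gval : G.coeff (m-1) = (∑ k ∈ range m, a k) - (m:ℝ)*((m:ℝ)-1)/2 := by
      rw [Gcoeff (m-1) (by omega), (by omega : m - 1 - 1 = m - 2), cH2, cPs]
      ring
    have hinj : Set.InjOn x (univ : Finset (Fin m)) := fun p _ q _ h => hx h
    have hcard : (univ : Finset (Fin m)).card = m := by simp
    have hGI : G = Lagrange.interpolate univ x (fun i => G.eval (x i)) :=
      Lagrange.eq_interpolate hinj (by rw [hcard]; exact Gdeg)
    have hbc : ∀ i : Fin m,
        (Lagrange.basis univ x i).coeff (m-1) = ∏ j ∈ univ.erase i, (x i - x j)⁻¹ := by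
      intro i
      have hnd : (Lagrange.basis univ x i).natDegree = m - 1 := by
        rw [Lagrange.natDegree_basis hinj (mem_univ i), hcard]
      rw [← hnd, coeff_natDegree, Lagrange.basis, leadingCoeff_prod]
      exact prod_congr rfl fun j _ => leadingCoeff_basisDivisor _ _
    have hsum : G.coeff (m-1) = ∑ i, G.eval (x i) * ∏ j ∈ univ.erase i, (x i - x j)⁻¹ := by
      conv_lhs => rw [hGI]
      rw [Lagrange.interpolate_apply, finset_sum_coeff]
      exact sum_congr rfl fun i _ => by rw [coeff_C_mul, hbc]
    have hPe : ∀ i : Fin m, P.eval (x i) = 0 := by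
      intro i
      rw [hPdef, eval_prod]
      refine prod_eq_zero (mem_range.mpr i.isLt) ?_
      rw [eval_sub, eval_X, eval_C, haf i, sub_self]
    have hP1e : ∀ i : Fin m, P1.eval (x i) = -∏ j ∈ univ.erase i, (x i - x j - 1) := by
      intro i
      rw [hP1def, eval_prod]
      have s1 : ∏ k ∈ range m, eval (x i) (X - C (a k + 1))
          = ∏ k ∈ range m, (x i - a k - 1) := by
        refine prod_congr rfl fun k _ => ?_
        rw [eval_sub, eval_X, eval_C]; ring
      rw [s1, ← Fin.prod_univ_eq_prod_range (fun k => x i - a k - 1) m]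
      have s2 : ∏ j : Fin m, (x i - a j - 1) = ∏ j : Fin m, (x i - x j - 1) :=
        prod_congr rfl fun j _ => by rw [haf j]
      rw [s2, ← Finset.mul_prod_erase univ _ (mem_univ i), sub_self, zero_sub, neg_one_mul]
    have hGe : ∀ i : Fin m, G.eval (x i) = x i * ∏ j ∈ univ.erase i, (x i - x j - 1) := by
      intro i
      rw [hGdef]
      simp only [eval_sub, eval_mul, eval_X, eval_C, hPe i, hP1e i]
      ring
    have hterm : ∀ i : Fin m, x i * ∏ j ∈ univ.erase i, ((x i - x j - 1) / (x i - x j))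
        = G.eval (x i) * ∏ j ∈ univ.erase i, (x i - x j)⁻¹ := by
      intro i
      rw [hGe i, prod_div_distrib, div_eq_mul_inv, ← prod_inv_distrib]
      ring
    calc ∑ i, x i * ∏ j ∈ univ.erase i, ((x i - x j - 1) / (x i - x j))
        = ∑ i, G.eval (x i) * ∏ j ∈ univ.erase i, (x i - x j)⁻¹ :=
          sum_congr rfl fun i _ => hterm i
      _ = G.coeff (m-1) := hsum.symm
      _ = (∑ k ∈ range m, a k) - (m:ℝ)*((m:ℝ)-1)/2 := Gval
      _ = (∑ i, x i) - (m:ℝ)*((m:ℝ)-1)/2 := by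
          rw [← Fin.sum_univ_eq_sum_range (fun k => a k) m,
            sum_congr rfl fun i _ => haf i]


open Finset

def PDr {m : ℕ} (x : Fin m → ℝ) : ℝ :=
  ∏ i, ∏ j ∈ univ.filter (fun j => i < j), (x i - x j)

noncomputable def Frhs (m : ℕ) (lam : Fin m → ℕ) : ℝ :=
  ((∑ i, lam i).factorial : ℝ) * PDr (fun i => ((hookNum m lam i : ℝ))) /
    ∏ i : Fin m, (((hookNum m lam i).toNat).factorial : ℝ)

def HookCorner (m : ℕ) (lam : Fin m → ℕ) (i : Fin m) : Prop :=
  0 < lam i ∧ ∀ j, i < j → lam j < lam i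

instance (m : ℕ) (lam : Fin m → ℕ) (i : Fin m) : Decidable (HookCorner m lam i) := by
  unfold HookCorner; infer_instance

lemma PD_split {m : ℕ} (x : Fin m → ℝ) (i : Fin m) :
    PDr x = ((∏ k ∈ univ.erase i, ∏ j ∈ (univ.filter (fun j => k < j)).erase i, (x k - x j))
      * ∏ k ∈ univ.filter (fun k => k < i), (x k - x i))
      * ∏ j ∈ univ.filter (fun j => i < j), (x i - x j) := by
  rw [PDr, ← Finset.mul_prod_erase univ _ (mem_univ i), mul_comm]
  congr 1
  have step : ∀ k ∈ univ.erase i, ∏ j ∈ univ.filter (fun j => k < j), (x k - x j)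
      = (∏ j ∈ (univ.filter (fun j => k < j)).erase i, (x k - x j))
        * (if k < i then (x k - x i) else 1) := by
    intro k hk
    by_cases hki : k < i
    · rw [if_pos hki, mul_comm]
      exact (Finset.mul_prod_erase _ _ (mem_filter.mpr ⟨mem_univ i, hki⟩)).symm
    · rw [if_neg hki, mul_one, Finset.erase_eq_of_notMem (by simp [hki])]
  rw [prod_congr rfl step, prod_mul_distrib]
  congr 1
  rw [← prod_filter]
  congr 1
  ext k
  simp only [mem_filter, mem_erase, mem_univ, true_and, and_true]
  constructor
  · exact fun h => h.2
  · exact fun h => ⟨ne_of_lt h, h⟩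

section HookLemmas

variable {m : ℕ} {lam : Fin m → ℕ}

lemma hook_lt (hanti : Antitone lam) {i j : Fin m} (hij : i < j) :
    hookNum m lam j < hookNum m lam i := by
  have h1 : lam j ≤ lam i := hanti hij.le
  have h2 : (i : ℤ) < (j : ℤ) := by exact_mod_cast (Fin.lt_iff_val_lt_val.mp hij)
  have h3 : (lam j : ℤ) ≤ (lam i : ℤ) := by exact_mod_cast h1
  unfold hookNum
  omega

lemma hook_nonneg (i : Fin m) : 0 ≤ hookNum m lam i := by
  have : (i : ℤ) < m := by exact_mod_cast i.isLt
  unfold hookNum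
  omega

lemma hook_ge_lam (i : Fin m) : (lam i : ℤ) ≤ hookNum m lam i := by
  have : (i : ℤ) < m := by exact_mod_cast i.isLt
  unfold hookNum
  omega

lemma hook_inj (hanti : Antitone lam) :
    Function.Injective (fun i => ((hookNum m lam i : ℤ) : ℝ)) := by
  intro i j h
  have h2 : ((hookNum m lam i : ℤ):ℝ) = ((hookNum m lam j : ℤ):ℝ) := h
  have h' : hookNum m lam i = hookNum m lam j := by exact_mod_cast h2
  rcases lt_trichotomy i j with hij | rfl | hij
  · exact absurd h' (hook_lt hanti hij).ne'
  · rfl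
  · exact absurd h' (hook_lt hanti hij).ne

lemma fin_sum_val_real : (∑ i : Fin m, ((i : ℕ) : ℝ)) * 2 = (m:ℝ) * ((m:ℝ) - 1) := by
  rcases Nat.eq_zero_or_pos m with rfl | hm
  · simp
  · rw [Fin.sum_univ_eq_sum_range (fun k => (k:ℝ)) m]
    have h0 := Finset.sum_range_id_mul_two m
    have h1 : (((∑ i ∈ range m, i) * 2 : ℕ) : ℝ) = ((m * (m-1) : ℕ) : ℝ) := by rw [h0]
    push_cast [Nat.cast_sub (by omega : 1 ≤ m)] at h1
    linarith

lemma hook_sum :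
    ∑ i, ((hookNum m lam i : ℤ):ℝ)
      = ((∑ i, lam i : ℕ):ℝ) + (m:ℝ)*((m:ℝ)-1)/2 := by
  have hterm : ∀ i : Fin m, ((hookNum m lam i : ℤ):ℝ)
      = ((lam i : ℝ) + ((m:ℝ) - 1)) - ((i:ℕ):ℝ) := by
    intro i; unfold hookNum; push_cast; ring
  rw [sum_congr rfl (fun i _ => hterm i), sum_sub_distrib, sum_add_distrib,
    sum_const, card_univ, Fintype.card_fin, nsmul_eq_mul]
  have h2 := fin_sum_val_real (m := m)
  have h3 : ((∑ i, lam i : ℕ):ℝ) = ∑ i : Fin m, (lam i : ℝ) := by push_cast; rfl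
  rw [h3]
  linarith

lemma hook_update_ne {i j : Fin m} (hj : j ≠ i) (v : ℕ) :
    hookNum m (Function.update lam i v) j = hookNum m lam j := by
  unfold hookNum; rw [Function.update_of_ne hj]

lemma hook_update_self (i : Fin m) (hpos : 0 < lam i) :
    hookNum m (Function.update lam i (lam i - 1)) i = hookNum m lam i - 1 := by
  unfold hookNum; rw [Function.update_self]
  have h1 : ((lam i - 1 : ℕ) : ℤ) = (lam i : ℤ) - 1 := by
    have : 1 ≤ lam i := hpos
    push_cast [Nat.cast_sub this]
    ring
  omega

lemma sum_update_corner' (i : Fin m) (hpos : 0 < lam i) :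
    ∑ j, Function.update lam i (lam i - 1) j = (∑ j, lam j) - 1 := by
  rw [Finset.sum_update_of_mem (mem_univ i), Finset.sdiff_singleton_eq_erase]
  have h2 : lam i + ∑ j ∈ univ.erase i, lam j = ∑ j, lam j :=
    Finset.add_sum_erase univ lam (mem_univ i)
  omega

lemma antitone_update_corner (hanti : Antitone lam) {i : Fin m}
    (hc : HookCorner m lam i) :
    Antitone (Function.update lam i (lam i - 1)) := by
  intro a b hab
  rcases hab.lt_or_eq with hlt | rfl
  · by_cases hb : b = i
    · subst hb
      rw [Function.update_self, Function.update_of_ne (ne_of_lt hlt)]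
      have := hanti hab
      omega
    · rw [Function.update_of_ne hb]
      by_cases ha : a = i
      · subst ha
        rw [Function.update_self]
        have := hc.2 b hlt
        omega
      · rw [Function.update_of_ne ha]
        exact hanti hab
  · exact le_refl _

lemma erase_split_prod (f : Fin m → ℝ) (i : Fin m) :
    ∏ j ∈ univ.erase i, f j
      = (∏ j ∈ univ.filter (fun j => j < i), f j)
        * ∏ j ∈ univ.filter (fun j => i < j), f j := by
  rw [← prod_union (by
    rw [Finset.disjoint_left]
    intro j hj hj'
    exact absurd ((mem_filter.mp hj).2.trans (mem_filter.mp hj').2) (lt_irrefl _))]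
  apply prod_congr _ (fun _ _ => rfl)
  ext j
  simp only [mem_erase, mem_univ, and_true, true_and, mem_union, mem_filter]
  constructor
  · exact fun h => lt_or_gt_of_ne h
  · rintro (h | h)
    · exact ne_of_lt h
    · exact ne_of_gt h

lemma Frhs_update_corner (hanti : Antitone lam) {i : Fin m} (hc : HookCorner m lam i) :
    Frhs m (Function.update lam i (lam i - 1))
      = Frhs m lam / ((∑ j, lam j : ℕ):ℝ) * (((hookNum m lam i : ℤ):ℝ)
        * ∏ j ∈ univ.erase i,
            ((((hookNum m lam i : ℤ):ℝ) - ((hookNum m lam j : ℤ):ℝ) - 1)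
              / (((hookNum m lam i : ℤ):ℝ) - ((hookNum m lam j : ℤ):ℝ)))) := by
  classical
  set x : Fin m → ℝ := fun j => ((hookNum m lam j : ℤ):ℝ) with hxdef
  set lam' := Function.update lam i (lam i - 1) with hlam'
  have hpos : 0 < lam i := hc.1
  have hn1 : 1 ≤ ∑ j, lam j :=
    le_trans hpos (Finset.single_le_sum (f := lam) (fun _ _ => Nat.zero_le _) (mem_univ i))
  have hsum' : ∑ j, lam' j = (∑ j, lam j) - 1 := sum_update_corner' i hpos
  have hhi1 : 1 ≤ hookNum m lam i := le_trans (by exact_mod_cast hpos) (hook_ge_lam i)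
  have hxipos : (1:ℝ) ≤ x i := by
    simpa [hxdef] using (by exact_mod_cast hhi1 : ((1:ℤ):ℝ) ≤ ((hookNum m lam i : ℤ):ℝ))
  have hxine : x i ≠ 0 := by
    intro h; rw [h] at hxipos; linarith
  have hxne : ∀ j : Fin m, j ≠ i → x i - x j ≠ 0 := fun j hj =>
    sub_ne_zero.mpr fun h => hj (hook_inj hanti h).symm
  have hD : ∏ j : Fin m, (((hookNum m lam' j).toNat).factorial : ℝ)
      = (((hookNum m lam i - 1).toNat).factorial : ℝ)
          * ∏ j ∈ univ.erase i, (((hookNum m lam j).toNat).factorial : ℝ) := by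
    rw [← Finset.mul_prod_erase univ _ (mem_univ i)]
    congr 1
    · rw [hlam', hook_update_self i hpos]
    · exact prod_congr rfl fun j hj => by rw [hlam', hook_update_ne (mem_erase.mp hj).1]
  have hDlam : ∏ j : Fin m, (((hookNum m lam j).toNat).factorial : ℝ)
      = (((hookNum m lam i).toNat).factorial : ℝ)
          * ∏ j ∈ univ.erase i, (((hookNum m lam j).toNat).factorial : ℝ) :=
    (Finset.mul_prod_erase univ _ (mem_univ i)).symm
  have hfact : x i * (((hookNum m lam i - 1).toNat).factorial : ℝ)
      = (((hookNum m lam i).toNat).factorial : ℝ) := by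
    have ht : (hookNum m lam i).toNat = ((hookNum m lam i - 1).toNat) + 1 := by omega
    have htn : ((hookNum m lam i).toNat : ℤ) = hookNum m lam i :=
      Int.toNat_of_nonneg (hook_nonneg i)
    have htnr := congrArg (fun z : ℤ => (z : ℝ)) htn
    have hxi : x i = (((hookNum m lam i).toNat : ℕ) : ℝ) := by
      rw [show x i = ((hookNum m lam i : ℤ):ℝ) from rfl, ← htnr]
      push_cast; ring
    rw [hxi, ht, Nat.factorial_succ]
    push_cast; ring
  have hPD : PDr (fun j => ((hookNum m lam' j : ℤ):ℝ))
      = PDr x * ∏ j ∈ univ.erase i, ((x i - x j - 1) / (x i - x j)) := by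
    have hxfun : (fun j => ((hookNum m lam' j : ℤ):ℝ)) = Function.update x i (x i - 1) := by
      funext j
      by_cases hj : j = i
      · subst hj
        rw [Function.update_self, hlam', hook_update_self j hpos]
        rw [hxdef]; push_cast; ring
      · rw [Function.update_of_ne hj, hlam', hook_update_ne hj]
    rw [hxfun, PD_split (Function.update x i (x i - 1)) i, PD_split x i,
      erase_split_prod (fun j => (x i - x j - 1)/(x i - x j)) i]
    have hB : (∏ k ∈ univ.erase i, ∏ j ∈ (univ.filter (fun j => k < j)).erase i,
          (Function.update x i (x i - 1) k - Function.update x i (x i - 1) j))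
        = ∏ k ∈ univ.erase i, ∏ j ∈ (univ.filter (fun j => k < j)).erase i, (x k - x j) :=
      prod_congr rfl fun k hk => prod_congr rfl fun j hj => by
        rw [Function.update_of_ne (mem_erase.mp hk).1, Function.update_of_ne (mem_erase.mp hj).1]
    rw [hB]
    have hlow : ∏ k ∈ univ.filter (fun k => k < i),
          (Function.update x i (x i - 1) k - Function.update x i (x i - 1) i)
        = (∏ k ∈ univ.filter (fun k => k < i), (x k - x i))
          * ∏ k ∈ univ.filter (fun k => k < i), ((x i - x k - 1)/(x i - x k)) := by
      rw [← prod_mul_distrib]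
      refine prod_congr rfl fun k hk => ?_
      have hki : k < i := (mem_filter.mp hk).2
      have hne := hxne k (ne_of_lt hki)
      rw [Function.update_of_ne (ne_of_lt hki), Function.update_self]
      field_simp
      ring
    have hhigh : ∏ j ∈ univ.filter (fun j => i < j),
          (Function.update x i (x i - 1) i - Function.update x i (x i - 1) j)
        = (∏ j ∈ univ.filter (fun j => i < j), (x i - x j))
          * ∏ j ∈ univ.filter (fun j => i < j), ((x i - x j - 1)/(x i - x j)) := by
      rw [← prod_mul_distrib]
      refine prod_congr rfl fun j hj => ?_
      have hij : i < j := (mem_filter.mp hj).2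
      have hne := hxne j (ne_of_gt hij)
      rw [Function.update_of_ne (ne_of_gt hij), Function.update_self]
      field_simp
      ring
    rw [hlow, hhigh]
    ring
  have hnfact : (((∑ j, lam j)).factorial : ℝ)
      = ((∑ j, lam j : ℕ):ℝ) * ((((∑ j, lam j) - 1).factorial : ℕ):ℝ) := by
    have := Nat.mul_factorial_pred (by omega : ∑ j, lam j ≠ 0)
    exact_mod_cast this.symm
  have hF1 : (0:ℝ) < (((hookNum m lam i - 1).toNat).factorial : ℝ) := by
    exact_mod_cast Nat.factorial_pos _
  have hDpos : (0:ℝ) < ∏ j ∈ univ.erase i, (((hookNum m lam j).toNat).factorial : ℝ) :=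
    prod_pos fun j _ => by exact_mod_cast Nat.factorial_pos _
  have hnne : ((∑ j, lam j : ℕ):ℝ) ≠ 0 := by
    exact Nat.cast_ne_zero.mpr (by omega)
  have hxrw : ∀ j, ((hookNum m lam j : ℤ):ℝ) = x j := fun j => rfl
  unfold Frhs
  simp only [hxrw]
  rw [hsum', hD, hPD, hDlam, ← hfact, hnfact]
  set A := PDr x with hA
  set R := ∏ j ∈ univ.erase i, ((x i - x j - 1) / (x i - x j)) with hRR
  set Fb := ((((∑ j, lam j) - 1).factorial : ℕ) : ℝ) with hFb
  set F1 := ((((hookNum m lam i - 1).toNat).factorial : ℕ) : ℝ) with hF1d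
  set D := ∏ j ∈ univ.erase i, ((((hookNum m lam j).toNat).factorial : ℕ) : ℝ) with hDd
  set N := ((∑ j, lam j : ℕ) : ℝ) with hN
  have hF1ne : F1 ≠ 0 := ne_of_gt hF1
  have hDne : D ≠ 0 := ne_of_gt hDpos
  field_simp

lemma noncorner_zero (hanti : Antitone lam) {i : Fin m}
    (hc : ¬ HookCorner m lam i) :
    ((hookNum m lam i : ℤ):ℝ)
      * ∏ j ∈ univ.erase i,
          ((((hookNum m lam i : ℤ):ℝ) - ((hookNum m lam j : ℤ):ℝ) - 1)
            / (((hookNum m lam i : ℤ):ℝ) - ((hookNum m lam j : ℤ):ℝ))) = 0 := by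
  by_cases h1 : (i : ℕ) + 1 < m
  · set i1 : Fin m := ⟨(i:ℕ)+1, h1⟩ with hi1
    have hii1 : i < i1 := by
      rw [Fin.lt_iff_val_lt_val]
      exact Nat.lt_succ_self _
    have hle : lam i1 ≤ lam i := hanti hii1.le
    have heq : lam i1 = lam i := by
      rcases Nat.lt_or_ge (lam i1) (lam i) with hlt | hge
      · exfalso
        apply hc
        refine ⟨by omega, fun j hj => ?_⟩
        have hj1 : i1 ≤ j := by
          rw [Fin.le_iff_val_le_val]
          rw [Fin.lt_iff_val_lt_val] at hj
          simp only [hi1]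
          omega
        exact lt_of_le_of_lt (hanti hj1) hlt
      · omega
    have hmem : i1 ∈ univ.erase i := mem_erase.mpr ⟨ne_of_gt hii1, mem_univ _⟩
    have hdiff : hookNum m lam i - hookNum m lam i1 = 1 := by
      unfold hookNum
      have e1 : ((lam i1 : ℕ):ℤ) = ((lam i : ℕ):ℤ) := by exact_mod_cast heq
      have e2 : ((i1 : ℕ):ℤ) = ((i:ℕ):ℤ) + 1 := by
        show ((((i:ℕ) + 1 : ℕ)):ℤ) = ((i:ℕ):ℤ) + 1
        push_cast; ring
      omega
    have hnum : ((hookNum m lam i : ℤ):ℝ) - ((hookNum m lam i1 : ℤ):ℝ) - 1 = 0 := by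
      have h3 : ((hookNum m lam i :ℤ):ℝ) - ((hookNum m lam i1 :ℤ):ℝ) = 1 := by
        exact_mod_cast hdiff
      linarith
    rw [Finset.prod_eq_zero hmem (by rw [hnum, zero_div]), mul_zero]
  · have hm0 : 0 < m := i.pos
    have hlast : (i:ℕ) = m - 1 := by have := i.isLt; omega
    have hlam0 : lam i = 0 := by
      by_contra h
      exact hc ⟨Nat.pos_of_ne_zero h, fun j hj => by
        have := j.isLt
        rw [Fin.lt_iff_val_lt_val] at hj
        omega⟩
    have hzero : hookNum m lam i = 0 := by
      unfold hookNum
      rw [hlam0]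
      have h2 : ((i:ℕ):ℤ) = (m:ℤ) - 1 := by
        have : ((i:ℕ):ℤ) = (((m - 1 : ℕ)):ℤ) := by exact_mod_cast hlast
        push_cast [Nat.cast_sub hm0] at this
        omega
      omega
    rw [hzero]
    simp

lemma Frhs_rec (hanti : Antitone lam) (hn : 0 < ∑ i, lam i) :
    ∑ i ∈ univ.filter (fun i => HookCorner m lam i),
        Frhs m (Function.update lam i (lam i - 1))
      = Frhs m lam := by
  classical
  have hnne : ((∑ j, lam j : ℕ):ℝ) ≠ 0 := Nat.cast_ne_zero.mpr (by omega)
  rw [sum_congr rfl (fun i hi => Frhs_update_corner hanti (mem_filter.mp hi).2)]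
  rw [Finset.sum_subset (filter_subset _ _) (fun i _ hi => by
    rw [mem_filter, not_and] at hi
    have hnc : ¬ HookCorner m lam i := hi (mem_univ i)
    rw [noncorner_zero hanti hnc, mul_zero])]
  rw [← Finset.mul_sum]
  have hA : ∑ i, ((hookNum m lam i :ℤ):ℝ)
        * ∏ j ∈ univ.erase i,
            ((((hookNum m lam i :ℤ):ℝ) - ((hookNum m lam j :ℤ):ℝ) - 1)
              / (((hookNum m lam i :ℤ):ℝ) - ((hookNum m lam j :ℤ):ℝ)))
      = (∑ i, ((hookNum m lam i :ℤ):ℝ)) - (m:ℝ)*((m:ℝ)-1)/2 :=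
    stepA _ (hook_inj hanti)
  rw [hA, hook_sum]
  have hnne2 : (∑ x : Fin m, ((lam x : ℕ):ℝ)) ≠ 0 := by
    rw [← Nat.cast_sum]; exact hnne
  field_simp
  ring

lemma Frhs_zero (h0 : ∀ i, lam i = 0) : Frhs m lam = 1 := by
  have hsum0 : ∑ i, lam i = 0 := by simp [h0]
  have hhook : ∀ i : Fin m, hookNum m lam i = (m : ℤ) - 1 - ((i:ℕ):ℤ) := by
    intro i; unfold hookNum; rw [h0 i]; push_cast; ring
  have hinner : ∀ i : Fin m,
      ∏ j ∈ univ.filter (fun j => i < j),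
          (((hookNum m lam i :ℤ):ℝ) - ((hookNum m lam j :ℤ):ℝ))
        = (((m - 1 - (i:ℕ) : ℕ)).factorial : ℝ) := by
    intro i
    have hstep : ∀ j ∈ univ.filter (fun j => i < j),
        ((hookNum m lam i :ℤ):ℝ) - ((hookNum m lam j :ℤ):ℝ) = (((j:ℕ) - (i:ℕ) : ℕ) : ℝ) := by
      intro j hj
      have hij : (i:ℕ) < (j:ℕ) := Fin.lt_iff_val_lt_val.mp (mem_filter.mp hj).2
      rw [hhook i, hhook j]
      push_cast [Nat.cast_sub hij.le]
      ring
    rw [prod_congr rfl hstep, ← Nat.cast_prod]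
    congr 1
    rw [← Finset.prod_range_add_one_eq_factorial]
    apply Finset.prod_bij (fun (j : Fin m) (hj : j ∈ univ.filter (fun j => i < j)) =>
      (j:ℕ) - (i:ℕ) - 1)
    · intro j hj
      have hij : (i:ℕ) < (j:ℕ) := Fin.lt_iff_val_lt_val.mp (mem_filter.mp hj).2
      have := j.isLt
      rw [mem_range]
      omega
    · intro a ha b hb hab
      have hia : (i:ℕ) < (a:ℕ) := Fin.lt_iff_val_lt_val.mp (mem_filter.mp ha).2
      have hib : (i:ℕ) < (b:ℕ) := Fin.lt_iff_val_lt_val.mp (mem_filter.mp hb).2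
      exact Fin.ext (by omega)
    · intro b hb
      rw [mem_range] at hb
      have := i.isLt
      refine ⟨⟨(i:ℕ) + b + 1, by omega⟩, ?_, by simp; omega⟩
      rw [mem_filter]
      exact ⟨mem_univ _, by rw [Fin.lt_iff_val_lt_val]; simp⟩
    · intro j hj
      have hij : (i:ℕ) < (j:ℕ) := Fin.lt_iff_val_lt_val.mp (mem_filter.mp hj).2
      omega
  have htoNat : ∀ i : Fin m, (hookNum m lam i).toNat = m - 1 - (i:ℕ) := by
    intro i
    have h2 : ((i:ℕ):ℤ) < (m:ℤ) := by exact_mod_cast i.isLt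
    rw [hhook i]
    omega
  unfold Frhs PDr
  rw [hsum0]
  rw [prod_congr rfl (fun i _ => hinner i)]
  have : ∀ i : Fin m, (((hookNum m lam i).toNat).factorial : ℝ)
      = (((m - 1 - (i:ℕ) : ℕ)).factorial : ℝ) := fun i => by rw [htoNat i]
  rw [prod_congr rfl (fun i _ => this i)]
  have hne : (∏ i : Fin m, (((m - 1 - (i:ℕ) : ℕ)).factorial : ℝ)) ≠ 0 :=
    ne_of_gt (prod_pos fun j _ => by exact_mod_cast Nat.factorial_pos _)
  rw [Nat.factorial_zero]
  field_simp
  norm_num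


section Comb

variable {m : ℕ}

abbrev CellT (m : ℕ) (lam : Fin m → ℕ) := {p : Fin m × ℕ // p.2 < lam p.1}

def SYTcond (m : ℕ) (lam : Fin m → ℕ) (T : CellT m lam → ℕ) : Prop :=
  (∀ a b : CellT m lam, a.1.1 = b.1.1 → a.1.2 < b.1.2 → T a < T b) ∧
  (∀ a b : CellT m lam, a.1.1 < b.1.1 → a.1.2 = b.1.2 → T a < T b) ∧
  Set.BijOn T Set.univ (Set.Icc 1 (∑ i, lam i))

variable {lam : Fin m → ℕ}

lemma upd_le (i : Fin m) (k : Fin m) : Function.update lam i (lam i - 1) k ≤ lam k := by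
  by_cases h : k = i
  · subst h; rw [Function.update_self]; omega
  · rw [Function.update_of_ne h]

def inclC (lam : Fin m → ℕ) (i : Fin m) (c : CellT m (Function.update lam i (lam i - 1))) :
    CellT m lam :=
  ⟨c.1, lt_of_lt_of_le c.2 (upd_le i c.1.1)⟩

lemma ext_pf {i : Fin m} {c : CellT m lam} (h : c.1 ≠ (i, lam i - 1)) :
    c.1.2 < Function.update lam i (lam i - 1) c.1.1 := by
  by_cases h1 : c.1.1 = i
  · rw [h1, Function.update_self]
    have h2 := c.2
    rw [h1] at h2
    have h3 : c.1.2 ≠ lam i - 1 := fun he => h (Prod.ext h1 he)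
    omega
  · rw [Function.update_of_ne h1]; exact c.2

lemma not_top_of_upd {i : Fin m} (c : CellT m (Function.update lam i (lam i - 1))) :
    (inclC lam i c).1 ≠ (i, lam i - 1) := by
  intro he
  have h2 := c.2
  have hfst : c.1.1 = i := congrArg Prod.fst he
  have hsnd : c.1.2 = lam i - 1 := congrArg Prod.snd he
  rw [hfst, hsnd, Function.update_self] at h2
  omega

def extT (lam : Fin m → ℕ) (i : Fin m) (T' : CellT m (Function.update lam i (lam i - 1)) → ℕ)
    (c : CellT m lam) : ℕ :=
  if h : c.1 = (i, lam i - 1) then ∑ j, lam j else T' ⟨c.1, ext_pf h⟩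

def resT (lam : Fin m → ℕ) (i : Fin m) (T : CellT m lam → ℕ)
    (c : CellT m (Function.update lam i (lam i - 1))) : ℕ :=
  T (inclC lam i c)

def topC (lam : Fin m → ℕ) (i : Fin m) (hpos : 0 < lam i) : CellT m lam :=
  ⟨(i, lam i - 1), Nat.sub_lt hpos one_pos⟩

lemma res_ext (i : Fin m) (T' : CellT m (Function.update lam i (lam i - 1)) → ℕ) :
    resT lam i (extT lam i T') = T' := by
  funext c
  rw [resT, extT, dif_neg (not_top_of_upd c)]
  exact congrArg T' (Subtype.ext rfl)

lemma ext_res {i : Fin m} (hpos : 0 < lam i) (T : CellT m lam → ℕ)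
    (htop : T (topC lam i hpos) = ∑ j, lam j) :
    extT lam i (resT lam i T) = T := by
  funext c
  rw [extT]
  by_cases h : c.1 = (i, lam i - 1)
  · rw [dif_pos h]
    have : c = topC lam i hpos := Subtype.ext h
    rw [this, htop]
  · rw [dif_neg h, resT]
    exact congrArg T (Subtype.ext rfl)

lemma exists_top (hn : 0 < ∑ j, lam j) {T : CellT m lam → ℕ} (hT : SYTcond m lam T) :
    ∃ c : CellT m lam, T c = ∑ j, lam j ∧ HookCorner m lam c.1.1
      ∧ c.1.2 = lam c.1.1 - 1 := by
  obtain ⟨c, -, hcn⟩ := hT.2.2.2.2 ⟨hn, le_refl _⟩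
  have hcell := c.2
  have hrowlast : c.1.2 + 1 ≥ lam c.1.1 := by
    by_contra hlt
    push_neg at hlt
    set cp : CellT m lam := ⟨(c.1.1, c.1.2 + 1), hlt⟩ with hcp
    have h1 : T c < T cp := hT.1 c cp rfl (Nat.lt_succ_self _)
    have h2 : T cp ≤ ∑ j, lam j := (hT.2.2.1 (Set.mem_univ cp)).2
    omega
  refine ⟨c, hcn, ⟨by omega, fun j hj => ?_⟩, by omega⟩
  by_contra hle
  push_neg at hle
  set cpp : CellT m lam := ⟨(j, c.1.2), lt_of_lt_of_le hcell hle⟩ with hcpp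
  have h1 : T c < T cpp := hT.2.1 c cpp hj rfl
  have h2 : T cpp ≤ ∑ j, lam j := (hT.2.2.1 (Set.mem_univ cpp)).2
  omega

lemma res_cond {i : Fin m} (hc : HookCorner m lam i)
    {T : CellT m lam → ℕ} (hT : SYTcond m lam T)
    (htop : T (topC lam i hc.1) = ∑ j, lam j) :
    SYTcond m (Function.update lam i (lam i - 1)) (resT lam i T) := by
  have hn1 : 1 ≤ ∑ j, lam j :=
    le_trans hc.1 (Finset.single_le_sum (f := lam) (fun _ _ => Nat.zero_le _) (mem_univ i))
  have hsum := sum_update_corner' i hc.1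
  refine ⟨fun a b h1 h2 => hT.1 _ _ h1 h2, fun a b h1 h2 => hT.2.1 _ _ h1 h2, ?_, ?_, ?_⟩
  · -- MapsTo
    intro c _
    have h1 := hT.2.2.1 (Set.mem_univ (inclC lam i c))
    have hne : resT lam i T c ≠ ∑ j, lam j := by
      intro he
      have : inclC lam i c = topC lam i hc.1 :=
        hT.2.2.2.1 (Set.mem_univ _) (Set.mem_univ _) (he.trans htop.symm)
      exact not_top_of_upd c (congrArg Subtype.val this)
    have h2 : 1 ≤ resT lam i T c := h1.1
    have h3 : resT lam i T c ≤ ∑ j, lam j := h1.2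
    rw [hsum]
    exact ⟨h2, by omega⟩
  · -- InjOn
    intro c _ d _ h
    have := hT.2.2.2.1 (Set.mem_univ (inclC lam i c)) (Set.mem_univ (inclC lam i d)) h
    have h2 : (inclC lam i c).1 = (inclC lam i d).1 := congrArg Subtype.val this
    exact Subtype.ext h2
  · -- SurjOn
    intro v hv
    rw [hsum] at hv
    have hv' : v ∈ Set.Icc 1 (∑ j, lam j) := ⟨hv.1, by have := hv.2; omega⟩
    obtain ⟨c, -, hcv⟩ := hT.2.2.2.2 hv'
    have hne : c.1 ≠ (i, lam i - 1) := by
      intro hp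
      have hct : c = topC lam i hc.1 := Subtype.ext hp
      rw [hct, htop] at hcv
      have := hv.2
      omega
    refine ⟨⟨c.1, ext_pf hne⟩, Set.mem_univ _, ?_⟩
    rw [resT]
    exact (congrArg T (Subtype.ext rfl)).trans hcv

lemma ext_cond (hanti : Antitone lam) {i : Fin m} (hc : HookCorner m lam i)
    {T' : CellT m (Function.update lam i (lam i - 1)) → ℕ}
    (hT' : SYTcond m (Function.update lam i (lam i - 1)) T') :
    SYTcond m lam (extT lam i T') := by
  have hn1 : 1 ≤ ∑ j, lam j :=
    le_trans hc.1 (Finset.single_le_sum (f := lam) (fun _ _ => Nat.zero_le _) (mem_univ i))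
  have hsum := sum_update_corner' i hc.1
  have hmaps' : ∀ c', 1 ≤ T' c' ∧ T' c' ≤ (∑ j, lam j) - 1 := by
    intro c'
    have h1 := hT'.2.2.1 (Set.mem_univ c')
    rw [hsum] at h1
    exact ⟨h1.1, h1.2⟩
  have hvalne : ∀ (c : CellT m lam) (h : c.1 ≠ (i, lam i - 1)),
      extT lam i T' c = T' ⟨c.1, ext_pf h⟩ := fun c h => dif_neg h
  constructor
  · -- rows
    intro a b h1 h2
    by_cases ha : a.1 = (i, lam i - 1)
    · exfalso
      have hb2 := b.2
      have haf : a.1.1 = i := congrArg Prod.fst ha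
      have has : a.1.2 = lam i - 1 := congrArg Prod.snd ha
      rw [h1] at haf
      rw [haf] at hb2
      omega
    · by_cases hb : b.1 = (i, lam i - 1)
      · rw [hvalne a ha, extT, dif_pos hb]
        have := (hmaps' ⟨a.1, ext_pf ha⟩).2
        omega
      · rw [hvalne a ha, hvalne b hb]
        exact hT'.1 _ _ h1 h2
  constructor
  · -- cols
    intro a b h1 h2
    by_cases ha : a.1 = (i, lam i - 1)
    · exfalso
      have hb2 := b.2
      have haf : a.1.1 = i := congrArg Prod.fst ha
      have has : a.1.2 = lam i - 1 := congrArg Prod.snd ha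
      have hbi : i < b.1.1 := haf ▸ h1
      have hcor := hc.2 b.1.1 hbi
      rw [← h2, has] at hb2
      omega
    · by_cases hb : b.1 = (i, lam i - 1)
      · rw [hvalne a ha, extT, dif_pos hb]
        have := (hmaps' ⟨a.1, ext_pf ha⟩).2
        omega
      · rw [hvalne a ha, hvalne b hb]
        exact hT'.2.1 _ _ h1 h2
  refine ⟨?_, ?_, ?_⟩
  · -- MapsTo
    intro c _
    by_cases h : c.1 = (i, lam i - 1)
    · rw [extT, dif_pos h]
      exact ⟨hn1, le_refl _⟩
    · rw [hvalne c h]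
      have := hmaps' ⟨c.1, ext_pf h⟩
      exact ⟨this.1, by omega⟩
  · -- InjOn
    intro c _ d _ h
    by_cases h1 : c.1 = (i, lam i - 1) <;> by_cases h2 : d.1 = (i, lam i - 1)
    · exact Subtype.ext (h1.trans h2.symm)
    · exfalso
      rw [extT, dif_pos h1, hvalne d h2] at h
      have := (hmaps' ⟨d.1, ext_pf h2⟩).2
      omega
    · exfalso
      rw [hvalne c h1, extT, dif_pos h2] at h
      have := (hmaps' ⟨c.1, ext_pf h1⟩).2
      omega
    · rw [hvalne c h1, hvalne d h2] at h
      have hval := hT'.2.2.2.1 (Set.mem_univ _) (Set.mem_univ _) h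
      have h3 : (⟨c.1, ext_pf h1⟩ : CellT m (Function.update lam i (lam i - 1))).1
          = (⟨d.1, ext_pf h2⟩ : CellT m (Function.update lam i (lam i - 1))).1 :=
        congrArg Subtype.val hval
      exact Subtype.ext h3
  · -- SurjOn
    intro v hv
    by_cases hvn : v = ∑ j, lam j
    · refine ⟨topC lam i hc.1, Set.mem_univ _, ?_⟩
      rw [hvn]
      exact dif_pos rfl
    · have hv' : v ∈ Set.Icc 1 ((∑ j, lam j) - 1) := by
        have := hv.1
        have := hv.2
        constructor <;> omega
      rw [← hsum] at hv'
      obtain ⟨c', -, hc'v⟩ := hT'.2.2.2.2 hv'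
      refine ⟨inclC lam i c', Set.mem_univ _, ?_⟩
      rw [hvalne _ (not_top_of_upd c')]
      exact (congrArg T' (Subtype.ext rfl)).trans hc'v


instance cellFinite (lam : Fin m → ℕ) : Finite (CellT m lam) := by
  have hb : ∀ i, lam i ≤ ∑ j, lam j :=
    fun i => Finset.single_le_sum (fun _ _ => Nat.zero_le _) (mem_univ i)
  refine Finite.of_injective
    (fun c => ((c.1.1, ⟨c.1.2, by have := c.2; have := hb c.1.1; omega⟩) :
      Fin m × Fin ((∑ j, lam j) + 1))) ?_
  intro a b h
  simp only [Prod.mk.injEq, Fin.mk.injEq] at h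
  exact Subtype.ext (Prod.ext h.1 h.2)

instance sytFinite (lam : Fin m → ℕ) :
    Finite {T : CellT m lam → ℕ // SYTcond m lam T} := by
  refine Finite.of_injective
    (fun T => (fun c => (⟨min (T.1 c) (∑ j, lam j), by omega⟩ :
      Fin ((∑ j, lam j) + 1)) : CellT m lam → Fin ((∑ j, lam j) + 1))) ?_
  intro S T h
  apply Subtype.ext
  funext c
  have hS : S.1 c ≤ ∑ j, lam j := (S.2.2.2.1 (Set.mem_univ c)).2
  have hT : T.1 c ≤ ∑ j, lam j := (T.2.2.2.1 (Set.mem_univ c)).2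
  have h2 : min (S.1 c) (∑ j, lam j) = min (T.1 c) (∑ j, lam j) :=
    congrArg Fin.val (congrFun h c)
  omega

lemma sytCard_zero' (h0 : ∀ i, lam i = 0) :
    Nat.card {T : CellT m lam → ℕ // SYTcond m lam T} = 1 := by
  have hcell : IsEmpty (CellT m lam) :=
    ⟨fun c => by have := c.2; rw [h0 c.1.1] at this; omega⟩
  have hn : ∑ i, lam i = 0 := by simp [h0]
  have hcond : ∀ T : CellT m lam → ℕ, SYTcond m lam T := by
    intro T
    refine ⟨fun a => (hcell.false a).elim, fun a => (hcell.false a).elim, ?_, ?_, ?_⟩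
    · intro c; exact (hcell.false c).elim
    · intro c; exact (hcell.false c).elim
    · rw [hn, Set.Icc_eq_empty (by norm_num)]
      exact Set.surjOn_empty _ _
  haveI : Unique {T : CellT m lam → ℕ // SYTcond m lam T} :=
    { default := ⟨fun c => (hcell.false c).elim, hcond _⟩
      uniq := fun T => Subtype.ext (funext fun c => (hcell.false c).elim) }
  exact Nat.card_unique

lemma sytCard_rec (hanti : Antitone lam) (hn : 0 < ∑ i, lam i) :
    Nat.card {T : CellT m lam → ℕ // SYTcond m lam T}
      = ∑ i ∈ univ.filter (fun i => HookCorner m lam i),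
          Nat.card {T' : CellT m (Function.update lam i (lam i - 1)) → ℕ //
            SYTcond m (Function.update lam i (lam i - 1)) T'} := by
  classical
  set F : (Σ i : {i : Fin m // HookCorner m lam i},
      {T' : CellT m (Function.update lam i.1 (lam i.1 - 1)) → ℕ //
        SYTcond m (Function.update lam i.1 (lam i.1 - 1)) T'}) →
      {T : CellT m lam → ℕ // SYTcond m lam T} :=
    fun s => ⟨extT lam s.1.1 s.2.1, ext_cond hanti s.1.2 s.2.2⟩ with hF
  have hFbij : Function.Bijective F := by
    constructor
    · rintro ⟨⟨i1, hc1⟩, ⟨T1, hT1⟩⟩ ⟨⟨i2, hc2⟩, ⟨T2, hT2⟩⟩ h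
      have hfun : extT lam i1 T1 = extT lam i2 T2 := congrArg Subtype.val h
      have h1 : extT lam i1 T1 (topC lam i1 hc1.1) = ∑ j, lam j := dif_pos rfl
      have h2 : extT lam i2 T2 (topC lam i2 hc2.1) = ∑ j, lam j := dif_pos rfl
      have h3 : extT lam i2 T2 (topC lam i1 hc1.1) = ∑ j, lam j := by
        rw [← hfun]; exact h1
      have hSYT2 : SYTcond m lam (extT lam i2 T2) := ext_cond hanti hc2 hT2
      have h4 : topC lam i1 hc1.1 = topC lam i2 hc2.1 :=
        hSYT2.2.2.2.1 (Set.mem_univ _) (Set.mem_univ _) (h3.trans h2.symm)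
      have h5 : i1 = i2 := congrArg (fun c : CellT m lam => c.1.1) h4
      subst h5
      have h6 : T1 = T2 := by
        have h7 := congrArg (resT lam i1) hfun
        rwa [res_ext, res_ext] at h7
      subst h6
      rfl
    · rintro ⟨T, hT⟩
      obtain ⟨c, hcn, hcor, hrow⟩ := exists_top hn hT
      have htopc : topC lam c.1.1 hcor.1 = c := by
        apply Subtype.ext
        show ((c.1.1, lam c.1.1 - 1) : Fin m × ℕ) = c.1
        rw [← hrow]
      refine ⟨⟨⟨c.1.1, hcor⟩, ⟨resT lam c.1.1 T,
        res_cond hcor hT (by rw [htopc]; exact hcn)⟩⟩, ?_⟩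
      apply Subtype.ext
      show extT lam c.1.1 (resT lam c.1.1 T) = T
      exact ext_res hcor.1 T (by rw [htopc]; exact hcn)
  letI : Fintype {i : Fin m // HookCorner m lam i} := Fintype.ofFinite _
  letI : ∀ i : {i : Fin m // HookCorner m lam i},
      Fintype {T' : CellT m (Function.update lam i.1 (lam i.1 - 1)) → ℕ //
        SYTcond m (Function.update lam i.1 (lam i.1 - 1)) T'} :=
    fun i => Fintype.ofFinite _
  calc Nat.card {T : CellT m lam → ℕ // SYTcond m lam T}
      = Nat.card (Σ i : {i : Fin m // HookCorner m lam i},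
          {T' : CellT m (Function.update lam i.1 (lam i.1 - 1)) → ℕ //
            SYTcond m (Function.update lam i.1 (lam i.1 - 1)) T'}) :=
        (Nat.card_eq_of_bijective F hFbij).symm
    _ = ∑ i : {i : Fin m // HookCorner m lam i},
          Nat.card {T' : CellT m (Function.update lam i.1 (lam i.1 - 1)) → ℕ //
            SYTcond m (Function.update lam i.1 (lam i.1 - 1)) T'} := by
        rw [Nat.card_eq_fintype_card, Fintype.card_sigma]
        exact sum_congr rfl fun i _ => Nat.card_eq_fintype_card.symm
    _ = ∑ i ∈ univ.filter (fun i => HookCorner m lam i),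
          Nat.card {T' : CellT m (Function.update lam i (lam i - 1)) → ℕ //
            SYTcond m (Function.update lam i (lam i - 1)) T'} :=
        by
          rw [Finset.sum_subtype (p := fun i => HookCorner m lam i) (univ.filter (fun i => HookCorner m lam i))
            (by intro x; simp [Finset.mem_filter]) (fun i => Nat.card
              {T' : CellT m (Function.update lam i (lam i - 1)) → ℕ //
                SYTcond m (Function.update lam i (lam i - 1)) T'})]

end Comb


lemma sytCard_eq {m : ℕ} (lam : Fin m → ℕ) :
    sytCard m lam = Nat.card {T : CellT m lam → ℕ // SYTcond m lam T} := rfl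

lemma main_aux : ∀ N : ℕ, ∀ (m : ℕ) (lam : Fin m → ℕ), (∑ i, lam i) = N → Antitone lam →
    ((Nat.card {T : CellT m lam → ℕ // SYTcond m lam T} : ℕ) : ℝ) = Frhs m lam := by
  intro N
  induction N using Nat.strong_induction_on with
  | _ N IH =>
    intro m lam hsum hanti
    rcases Nat.eq_zero_or_pos N with rfl | hpos
    · have h0 : ∀ i, lam i = 0 := fun i => by
        have := Finset.single_le_sum (f := lam) (fun _ _ => Nat.zero_le _) (mem_univ i)
        omega
      rw [sytCard_zero' h0, Frhs_zero h0, Nat.cast_one]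
    · have hn : 0 < ∑ i, lam i := hsum ▸ hpos
      rw [sytCard_rec hanti hn, ← Frhs_rec hanti hn, Nat.cast_sum]
      refine Finset.sum_congr rfl fun i hi => ?_
      have hcor : HookCorner m lam i := (mem_filter.mp hi).2
      exact IH (N - 1) (by omega) m _
        (by rw [sum_update_corner' i hcor.1, hsum])
        (antitone_update_corner hanti hcor)

/-- The number of standard Young tableaux of shape `λ = (λ_1 ≥ … ≥ λ_m > 0)` equals
`|λ|! · ∏_{i<j}(h_i − h_j) / ∏_i h_i!`, where `h_i = λ_i − i + m`. -/
theorem sytCard_eq_hook_formula (m : ℕ) (lam : Fin m → ℕ)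
    (hanti : Antitone lam) (hpos : ∀ i, 0 < lam i) :
    (sytCard m lam : ℝ) =
      ((∑ i, lam i).factorial : ℝ) *
        (∏ i : Fin m, ∏ j ∈ Finset.univ.filter (fun j => i < j),
            ((hookNum m lam i : ℝ) - (hookNum m lam j : ℝ))) /
        ∏ i : Fin m, (((hookNum m lam i).toNat).factorial : ℝ) := by
  have h := main_aux (∑ i, lam i) m lam rfl hanti
  calc (sytCard m lam : ℝ)
      = ((Nat.card {T : CellT m lam → ℕ // SYTcond m lam T} : ℕ) : ℝ) := by
        rw [sytCard_eq]
    _ = Frhs m lam := h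
    _ = _ := by unfold Frhs PDr; rfl
end HookLemmas
end
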